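/- arXiv:2105.08778 — 10 statements merged into one kernel-verified Lean document; each statement's English description precedes it below -/
import Mathlib

section
/- For a Hermitian matrix A that is neither positive semidefinite nor negative semidefinite, and any positive semidefinite matrix B, there exists a positive linear map Φ with Φ(A) = B. -/
open Matrix
open scoped ComplexOrder

noncomputable section

/-- The real vector space of `n × n` Hermitian (self-adjoint) complex matrices. -/
abbrev Herm (n : ℕ) := selfAdjoint (Matrix (Fin n) (Fin n) ℂ)

/-- A linear map between Hermitian matrix spaces is positive if it maps
positive semidefinite matrices to positive semidefinite matrices. -/
def IsPositiveMap {n k : ℕ} (Φ : Herm n →ₗ[ℝ] Herm k) : Prop :=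
  ∀ X : Herm n, (X : Matrix (Fin n) (Fin n) ℂ).PosSemidef →
    ((Φ X : Matrix (Fin k) (Fin k) ℂ)).PosSemidef

/-- Trace preservation. -/
def IsTracePreserving {n k : ℕ} (Φ : Herm n →ₗ[ℝ] Herm k) : Prop :=
  ∀ X : Herm n,
    ((Φ X : Matrix (Fin k) (Fin k) ℂ)).trace = ((X : Matrix (Fin n) (Fin n) ℂ)).trace

/-- Operator norm (largest singular value) of a Hermitian matrix:
the largest absolute value of an eigenvalue. -/
def opN {n : ℕ} {A : Matrix (Fin n) (Fin n) ℂ} (hA : A.IsHermitian) : ℝ :=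
  ⨆ i, |hA.eigenvalues i|

/-- Trace norm (sum of singular values) of a Hermitian matrix:
the sum of absolute values of its eigenvalues. -/
def trN {n : ℕ} {A : Matrix (Fin n) (Fin n) ℂ} (hA : A.IsHermitian) : ℝ :=
  ∑ i, |hA.eigenvalues i|

/-- Largest eigenvalue of a Hermitian matrix. -/
def lmax {n : ℕ} {A : Matrix (Fin n) (Fin n) ℂ} (hA : A.IsHermitian) : ℝ :=
  ⨆ i, hA.eigenvalues i

/-- Smallest eigenvalue of a Hermitian matrix. -/
def lmin {n : ℕ} {A : Matrix (Fin n) (Fin n) ℂ} (hA : A.IsHermitian) : ℝ :=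
  ⨅ i, hA.eigenvalues i

/-- μ_∞(A) = min{p ≥ 0 : ∃ X Hermitian, ‖X‖_∞ ≤ 1, A + pX ≥ 0}. -/
def muInf (n : ℕ) (A : Herm n) : ℝ :=
  sInf {p : ℝ | 0 ≤ p ∧ ∃ X : Herm n, opN X.2 ≤ 1 ∧
    ((A : Matrix (Fin n) (Fin n) ℂ) + p • (X : Matrix (Fin n) (Fin n) ℂ)).PosSemidef}

/-- μ_1(A) = min{p ≥ 0 : ∃ X Hermitian, ‖X‖_1 ≤ 1, A + pX ≥ 0}. -/
def muTr (n : ℕ) (A : Herm n) : ℝ :=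
  sInf {p : ℝ | 0 ≤ p ∧ ∃ X : Herm n, trN X.2 ≤ 1 ∧
    ((A : Matrix (Fin n) (Fin n) ℂ) + p • (X : Matrix (Fin n) (Fin n) ℂ)).PosSemidef}

end
/-- If `A` is Hermitian and neither positive nor negative semidefinite,
and `B` is positive semidefinite, then there is a positive linear map `Φ` with `Φ(A) = B`. -/
theorem stmt0 (n k : ℕ) (A : Matrix (Fin n) (Fin n) ℂ) (hA : A.IsHermitian)
    (hA1 : ¬ A.PosSemidef) (hA2 : ¬ (-A).PosSemidef)
    (B : Matrix (Fin k) (Fin k) ℂ) (hB : B.PosSemidef) :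
    ∃ Φ : Herm n →ₗ[ℝ] Herm k, IsPositiveMap Φ ∧ Φ ⟨A, hA⟩ = ⟨B, hB.1⟩ := by
  classical
  -- Find a vector with positive quadratic form, using ¬ (-A).PosSemidef
  have hnegherm : (-A).IsHermitian := hA.neg
  have hx : ∃ x : Fin n → ℂ, 0 < (star x ⬝ᵥ A *ᵥ x).re := by
    by_contra h
    push_neg at h
    apply hA2
    refine Matrix.PosSemidef.of_dotProduct_mulVec_nonneg hnegherm (fun x => ?_)
    have h1 : star (star x ⬝ᵥ A *ᵥ x) = star x ⬝ᵥ A *ᵥ x := by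
      rw [← Matrix.star_dotProduct, Matrix.star_mulVec, ← Matrix.dotProduct_mulVec, hA.eq]
    have him : (star x ⬝ᵥ A *ᵥ x).im = 0 := by
      rw [Complex.star_def] at h1
      exact Complex.conj_eq_iff_im.mp h1
    have hre := h x
    rw [Complex.le_def]
    constructor
    · simp [Matrix.neg_mulVec, dotProduct_neg]
      linarith
    · simp [Matrix.neg_mulVec, dotProduct_neg, him]
  obtain ⟨x, hxpos⟩ := hx
  set a : ℝ := (star x ⬝ᵥ A *ᵥ x).re with ha
  -- the linear functional X ↦ re (x* X x) / a
  let f : Herm n →ₗ[ℝ] ℝ :=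
    { toFun := fun X => (star x ⬝ᵥ (X : Matrix (Fin n) (Fin n) ℂ) *ᵥ x).re / a
      map_add' := by
        intro X Y
        simp [Matrix.add_mulVec, dotProduct_add, add_div]
      map_smul' := by
        intro c X
        show (star x ⬝ᵥ (c • (X : Matrix (Fin n) (Fin n) ℂ)) *ᵥ x).re / a
            = c * ((star x ⬝ᵥ (X : Matrix (Fin n) (Fin n) ℂ) *ᵥ x).re / a)
        rw [Matrix.smul_mulVec, dotProduct_smul, Complex.smul_re,
          smul_eq_mul, mul_div_assoc] }
  refine ⟨LinearMap.smulRight f ⟨B, hB.1⟩, ?_, ?_⟩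
  · intro X hX
    have hf : 0 ≤ f X := by
      have := hX.re_dotProduct_nonneg x
      have ha' : 0 < a := hxpos
      exact div_nonneg (by simpa using this) ha'.le
    have hcoe : ((LinearMap.smulRight f ⟨B, hB.1⟩ X : Herm k) : Matrix (Fin k) (Fin k) ℂ)
        = f X • B := rfl
    rw [hcoe]
    refine Matrix.PosSemidef.of_dotProduct_mulVec_nonneg ?_ ?_
    · show (f X • B)ᴴ = f X • B
      rw [Matrix.conjTranspose_smul, star_trivial, hB.1.eq]
    · intro v
      have h0 := hB.dotProduct_mulVec_nonneg v
      have : (f X • B) *ᵥ v = f X • (B *ᵥ v) := Matrix.smul_mulVec _ _ _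
      rw [this, dotProduct_smul]
      have : (f X : ℂ) • (star v ⬝ᵥ B *ᵥ v) = ((f X : ℂ)) * (star v ⬝ᵥ B *ᵥ v) := rfl
      rw [Complex.real_smul]
      have hc : (0:ℂ) ≤ (f X : ℂ) := by
        rw [Complex.le_def]; simp [hf]
      exact mul_nonneg hc h0
  · have hfa : f ⟨A, hA⟩ = 1 := by
      simp only [f, LinearMap.coe_mk, AddHom.coe_mk]
      exact div_self (ne_of_gt hxpos)
    ext1
    have : ((LinearMap.smulRight f ⟨B, hB.1⟩ ⟨A, hA⟩ : Herm k) : Matrix (Fin k) (Fin k) ℂ)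
        = f ⟨A, hA⟩ • B := rfl
    rw [this, hfa, one_smul]
end

section
/- If Φ: H_n → H_k is a positive trace-preserving linear map and A is Hermitian, then μ(Φ(A)) ≤ μ(A), where μ(A) = min{p ≥ 0 : ∃ X Hermitian, ‖X‖_1 ≤ 1, A + pX ≥ 0}. -/
open Matrix
open scoped ComplexOrder

noncomputable section Aux

variable {m : ℕ} {A : Matrix (Fin m) (Fin m) ℂ}

/-- conjugation of a real diagonal by the eigenvector unitary of `hA` -/
def cdiag (hA : A.IsHermitian) (f : Fin m → ℝ) : Matrix (Fin m) (Fin m) ℂ :=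
  (hA.eigenvectorUnitary : Matrix (Fin m) (Fin m) ℂ) * diagonal (fun i => (f i : ℂ)) *
    star (hA.eigenvectorUnitary : Matrix (Fin m) (Fin m) ℂ)

lemma cdiag_isHermitian (hA : A.IsHermitian) (f : Fin m → ℝ) :
    (cdiag hA f).IsHermitian := by
  unfold cdiag
  rw [star_eq_conjTranspose]
  exact isHermitian_mul_mul_conjTranspose _ (isHermitian_diagonal_of_self_adjoint _
    (by ext i; simp))

lemma cdiag_posSemidef (hA : A.IsHermitian) {f : Fin m → ℝ} (hf : ∀ i, 0 ≤ f i) :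
    (cdiag hA f).PosSemidef := by
  unfold cdiag
  rw [star_eq_conjTranspose]
  exact PosSemidef.mul_mul_conjTranspose_same
    (posSemidef_diagonal_iff.mpr fun i => Complex.zero_le_real.mpr (hf i)) _

lemma cdiag_trace (hA : A.IsHermitian) (f : Fin m → ℝ) :
    (cdiag hA f).trace = ∑ i, (f i : ℂ) := by
  unfold cdiag
  rw [trace_mul_cycle, Unitary.star_mul_self_of_mem (hA.eigenvectorUnitary).2, one_mul,
    trace_diagonal]

lemma cdiag_add (hA : A.IsHermitian) (f g : Fin m → ℝ) :
    cdiag hA (f + g) = cdiag hA f + cdiag hA g := by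
  unfold cdiag
  have h : (fun i => (((f + g) i : ℝ) : ℂ)) = (fun i => ((f i : ℝ) : ℂ)) + fun i => ((g i : ℝ) : ℂ) := by
    funext i; push_cast; simp
  rw [h]
  have h2 : diagonal ((fun i => ((f i : ℝ) : ℂ)) + fun i => ((g i : ℝ) : ℂ))
      = diagonal (fun i => ((f i : ℝ) : ℂ)) + diagonal (fun i => ((g i : ℝ) : ℂ)) := by
    ext i j; by_cases hij : i = j <;> simp [hij]
  rw [h2, mul_add, add_mul]

lemma cdiag_eigen (hA : A.IsHermitian) : cdiag hA hA.eigenvalues = A := by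
  unfold cdiag
  have h := hA.spectral_theorem
  rw [Unitary.conjStarAlgAut_apply] at h
  exact h.symm

lemma cdiag_const (hA : A.IsHermitian) (c : ℝ) :
    cdiag hA (fun _ => c) = diagonal (fun _ => (c : ℂ)) := by
  unfold cdiag
  rw [← smul_one_eq_diagonal, mul_smul_comm, mul_one, smul_mul_assoc,
    Unitary.mul_star_self_of_mem (hA.eigenvectorUnitary).2, smul_one_eq_diagonal]

lemma trace_eq_sum_eig (hA : A.IsHermitian) : A.trace = ∑ i, (hA.eigenvalues i : ℂ) := by
  conv_lhs => rw [← cdiag_eigen hA]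
  exact cdiag_trace hA _

/-- Diagonal entries of a PSD matrix are nonnegative (complex order). -/
lemma psd_diag_nonneg {M : Matrix (Fin m) (Fin m) ℂ} (hM : M.PosSemidef) (i : Fin m) :
    0 ≤ M i i := by
  exact hM.diag_nonneg

lemma psd_diag_eq_re {M : Matrix (Fin m) (Fin m) ℂ} (hM : M.PosSemidef) (i : Fin m) :
    M i i = ((M i i).re : ℂ) ∧ 0 ≤ (M i i).re := by
  have h := psd_diag_nonneg hM i
  rw [Complex.nonneg_iff] at h
  exact ⟨Complex.ext rfl h.2.symm, h.1⟩

/-- For a PSD matrix the trace norm equals the real part of the trace. -/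
lemma trN_psd {M : Matrix (Fin m) (Fin m) ℂ} (hM : M.PosSemidef) :
    trN hM.1 = M.trace.re := by
  rw [trN, trace_eq_sum_eig hM.1]
  rw [Complex.re_sum]
  exact Finset.sum_congr rfl fun i _ => by
    rw [Complex.ofReal_re, abs_of_nonneg (hM.eigenvalues_nonneg i)]

/-- Key lemma: positive trace-preserving maps are trace-norm contractive. -/
lemma trN_contract {n k : ℕ} (Φ : Herm n →ₗ[ℝ] Herm k) (hpos : IsPositiveMap Φ)
    (htp : IsTracePreserving Φ) (X : Herm n) : trN (Φ X).2 ≤ trN X.2 := by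
  have hX : (X : Matrix (Fin n) (Fin n) ℂ).IsHermitian := X.2
  set lam := hX.eigenvalues with hlam
  set fp : Fin n → ℝ := fun i => max (lam i) 0 with hfp
  set fm : Fin n → ℝ := fun i => max (-(lam i)) 0 with hfm
  have hfp0 : ∀ i, 0 ≤ fp i := fun i => le_max_right _ _
  have hfm0 : ∀ i, 0 ≤ fm i := fun i => le_max_right _ _
  set Xp : Herm n := ⟨cdiag hX fp, cdiag_isHermitian hX fp⟩ with hXp
  set Xm : Herm n := ⟨cdiag hX fm, cdiag_isHermitian hX fm⟩ with hXm
  -- X = Xp - Xm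
  have hsum : lam + fm = fp := by
    funext i
    simp only [Pi.add_apply, hfp, hfm]
    rcases le_total (lam i) 0 with h | h
    · rw [max_eq_right h, max_eq_left (by linarith)]; ring
    · rw [max_eq_left h, max_eq_right (by linarith)]; ring
  have hXsub : X = Xp - Xm := by
    apply Subtype.ext
    have key : (X : Matrix (Fin n) (Fin n) ℂ) + cdiag hX fm = cdiag hX fp := by
      rw [← hsum, cdiag_add, hlam, cdiag_eigen]
    show (X : Matrix (Fin n) (Fin n) ℂ) = ((Xp - Xm : Herm n) : Matrix (Fin n) (Fin n) ℂ)
    rw [AddSubgroup.coe_sub, hXp, hXm]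
    rw [eq_sub_iff_add_eq]
    exact key
  have hPhiX : Φ X = Φ Xp - Φ Xm := by rw [hXsub, map_sub]
  have hPp : ((Φ Xp : Matrix (Fin k) (Fin k) ℂ)).PosSemidef :=
    hpos Xp (cdiag_posSemidef hX hfp0)
  have hPm : ((Φ Xm : Matrix (Fin k) (Fin k) ℂ)).PosSemidef :=
    hpos Xm (cdiag_posSemidef hX hfm0)
  have htrp : ((Φ Xp : Matrix (Fin k) (Fin k) ℂ)).trace = ∑ i, (fp i : ℂ) := by
    rw [htp Xp]; exact cdiag_trace hX fp
  have htrm : ((Φ Xm : Matrix (Fin k) (Fin k) ℂ)).trace = ∑ i, (fm i : ℂ) := by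
    rw [htp Xm]; exact cdiag_trace hX fm
  -- diagonalize Φ X
  have hH : ((Φ X : Matrix (Fin k) (Fin k) ℂ)).IsHermitian := (Φ X).2
  set V : Matrix (Fin k) (Fin k) ℂ := (hH.eigenvectorUnitary : Matrix (Fin k) (Fin k) ℂ) with hV
  set P' := star V * (Φ Xp : Matrix (Fin k) (Fin k) ℂ) * V with hP'def
  set Q' := star V * (Φ Xm : Matrix (Fin k) (Fin k) ℂ) * V with hQ'def
  have hP' : P'.PosSemidef := by
    have := hPp.mul_mul_conjTranspose_same (star V)
    simpa [hP'def, star_eq_conjTranspose, conjTranspose_conjTranspose] using this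
  have hQ' : Q'.PosSemidef := by
    have := hPm.mul_mul_conjTranspose_same (star V)
    simpa [hQ'def, star_eq_conjTranspose, conjTranspose_conjTranspose] using this
  have hVs : V * star V = (1 : Matrix (Fin k) (Fin k) ℂ) :=
    Unitary.mul_star_self_of_mem (hH.eigenvectorUnitary).2
  have hco : (Φ X : Matrix (Fin k) (Fin k) ℂ)
      = (Φ Xp : Matrix (Fin k) (Fin k) ℂ) - (Φ Xm : Matrix (Fin k) (Fin k) ℂ) := by
    rw [hPhiX]; push_cast; ring
  have hdiag : diagonal (RCLike.ofReal ∘ hH.eigenvalues) = P' - Q' := by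
    have h1 : star V * (Φ X : Matrix (Fin k) (Fin k) ℂ) * V
        = diagonal (RCLike.ofReal ∘ hH.eigenvalues) := by
        have h := hH.conjStarAlgAut_star_eigenvectorUnitary
        rw [Unitary.conjStarAlgAut_star_apply] at h
        exact h
    rw [← h1, hco, mul_sub, sub_mul]
  have hentry : ∀ i, (hH.eigenvalues i : ℂ) = P' i i - Q' i i := by
    intro i
    have := congrFun (congrFun hdiag i) i
    simpa [Matrix.sub_apply] using this
  have hmu : ∀ i, hH.eigenvalues i = (P' i i).re - (Q' i i).re := by
    intro i
    have := congrArg Complex.re (hentry i)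
    simpa using this
  -- trace computations
  have htrP' : P'.trace = ∑ i, (fp i : ℂ) := by
    rw [hP'def, trace_mul_cycle, hVs, one_mul, htrp]
  have htrQ' : Q'.trace = ∑ i, (fm i : ℂ) := by
    rw [hQ'def, trace_mul_cycle, hVs, one_mul, htrm]
  have hsumP : ∑ i, (P' i i).re = ∑ i, fp i := by
    have h := congrArg Complex.re htrP'
    simpa [Matrix.trace, Matrix.diag, Complex.re_sum] using h
  have hsumQ : ∑ i, (Q' i i).re = ∑ i, fm i := by
    have h := congrArg Complex.re htrQ'
    simpa [Matrix.trace, Matrix.diag, Complex.re_sum] using h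
  -- conclude
  show ∑ i, |hH.eigenvalues i| ≤ ∑ i, |hX.eigenvalues i|
  calc ∑ i, |hH.eigenvalues i| ≤ ∑ i, ((P' i i).re + (Q' i i).re) := by
        apply Finset.sum_le_sum
        intro i _
        rw [hmu i]
        refine (abs_sub _ _).trans ?_
        rw [abs_of_nonneg (psd_diag_eq_re hP' i).2, abs_of_nonneg (psd_diag_eq_re hQ' i).2]
    _ = ∑ i, fp i + ∑ i, fm i := by rw [Finset.sum_add_distrib, hsumP, hsumQ]
    _ = ∑ i, |lam i| := by
        rw [← Finset.sum_add_distrib]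
        exact Finset.sum_congr rfl fun i _ => max_zero_add_max_neg_zero_eq_abs_self _
  
end Aux

/-- `μ_1` is non-increasing under positive trace-preserving maps. -/
theorem stmt2 (n k : ℕ) (Φ : Herm n →ₗ[ℝ] Herm k)
    (hpos : IsPositiveMap Φ) (htp : IsTracePreserving Φ) (A : Herm n) :
    muTr k (Φ A) ≤ muTr n A := by
  rw [muTr, muTr]
  apply csInf_le_csInf
  · exact ⟨0, fun p hp => hp.1⟩
  · -- nonemptiness of the set for A
    have hA : (A : Matrix (Fin n) (Fin n) ℂ).IsHermitian := A.2
    set lam := hA.eigenvalues with hlam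
    set c : ℝ := ∑ i, |lam i| with hc
    have hc0 : 0 ≤ c := Finset.sum_nonneg fun i _ => abs_nonneg _
    rcases Nat.eq_zero_or_pos n with hn | hn
    · subst hn
      refine ⟨0, le_refl 0, A, by simp [trN], ?_⟩
      rw [zero_smul, add_zero]
      exact ⟨hA, fun x => by simp [Subsingleton.elim x 0]⟩
    · have hX2 : (diagonal (fun _ : Fin n => ((((n : ℝ)⁻¹ : ℝ)) : ℂ))).IsHermitian :=
        isHermitian_diagonal_of_self_adjoint _ (by funext i; simp)
      set X : Herm n := ⟨diagonal (fun _ : Fin n => ((((n : ℝ)⁻¹ : ℝ)) : ℂ)), hX2⟩ with hXdef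
      have hn' : (0 : ℝ) < (n : ℝ) := by exact_mod_cast hn
      refine ⟨(n : ℝ) * c, by positivity, X, ?_, ?_⟩
      · have hpsd : (X : Matrix (Fin n) (Fin n) ℂ).PosSemidef :=
          posSemidef_diagonal_iff.mpr fun i => Complex.zero_le_real.mpr (by positivity)
        have h1 : trN X.2 = ((X : Matrix (Fin n) (Fin n) ℂ)).trace.re := trN_psd hpsd
        rw [h1]
        have h2 : ((X : Matrix (Fin n) (Fin n) ℂ)).trace = ∑ _i : Fin n, (((n : ℝ)⁻¹ : ℝ) : ℂ) := by
          rw [hXdef]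
          exact trace_diagonal _
        rw [h2]
        rw [Finset.sum_const, Finset.card_univ, Fintype.card_fin]
        simp only [nsmul_eq_mul, Complex.mul_re, Complex.natCast_re, Complex.ofReal_re,
          Complex.natCast_im, Complex.ofReal_im, mul_zero, sub_zero]
        rw [mul_inv_cancel₀ (ne_of_gt hn')]
      · have hsm : ((n : ℝ) * c) • (X : Matrix (Fin n) (Fin n) ℂ)
            = diagonal (fun _ : Fin n => (c : ℂ)) := by
          rw [hXdef]
          show ((n : ℝ) * c) • diagonal (fun _ : Fin n => ((((n : ℝ)⁻¹ : ℝ)) : ℂ)) = _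
          rw [← diagonal_smul]
          have hfun : ((n : ℝ) * c) • (fun _ : Fin n => ((((n : ℝ)⁻¹ : ℝ)) : ℂ))
              = fun _ : Fin n => (c : ℂ) := by
            funext i
            show ((n : ℝ) * c) • ((((n : ℝ)⁻¹ : ℝ)) : ℂ) = (c : ℂ)
            rw [Complex.real_smul]
            push_cast
            field_simp
          rw [hfun]
        have key : (A : Matrix (Fin n) (Fin n) ℂ) + diagonal (fun _ : Fin n => (c : ℂ))
            = cdiag hA (lam + fun _ => c) := by
          rw [cdiag_add, cdiag_const, hlam, cdiag_eigen]
        rw [hsm, key]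
        apply cdiag_posSemidef
        intro i
        have hle : |lam i| ≤ c := Finset.single_le_sum (f := fun i => |lam i|)
          (fun i _ => abs_nonneg _) (Finset.mem_univ i)
        have := (abs_le.mp hle).1
        simp only [Pi.add_apply]
        linarith
  · rintro p ⟨hp0, X, hX1, hPSD⟩
    refine ⟨hp0, Φ X, (trN_contract Φ hpos htp X).trans hX1, ?_⟩
    set Y : Herm n := A + p • X with hY
    have hYco : (Y : Matrix (Fin n) (Fin n) ℂ)
        = (A : Matrix (Fin n) (Fin n) ℂ) + p • (X : Matrix (Fin n) (Fin n) ℂ) := by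
      rw [hY]; push_cast; ring
    have hpsdY : ((Φ Y : Matrix (Fin k) (Fin k) ℂ)).PosSemidef := by
      apply hpos
      rw [hYco]; exact hPSD
    have : (Φ Y : Matrix (Fin k) (Fin k) ℂ)
        = (Φ A : Matrix (Fin k) (Fin k) ℂ) + p • (Φ X : Matrix (Fin k) (Fin k) ℂ) := by
      rw [hY, map_add, LinearMap.map_smul]; push_cast; ring
    rwa [this] at hpsdY
end

section
/- If there exists a positive unital linear map Φ: H_n → H_k with Φ(A) = B for Hermitian A, B, then ‖A₊‖_∞ ≥ ‖B₊‖_∞ and ‖A₋‖_∞ ≥ ‖B₋‖_∞. -/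
open Matrix
open scoped ComplexOrder

lemma real_smul_mat {m : ℕ} (c : ℝ) (M : Matrix (Fin m) (Fin m) ℂ) :
    c • M = (c : ℂ) • M := by
  ext i j; simp [Complex.real_smul]

lemma smul_one_sub_psd {m : ℕ} {P : Matrix (Fin m) (Fin m) ℂ} (hP : P.IsHermitian)
    {c : ℝ} (h : ∀ i, hP.eigenvalues i ≤ c) :
    ((c : ℂ) • (1 : Matrix (Fin m) (Fin m) ℂ) - P).PosSemidef := by
  have hV : (hP.eigenvectorUnitary : Matrix (Fin m) (Fin m) ℂ) *
      star (hP.eigenvectorUnitary : Matrix (Fin m) (Fin m) ℂ) = 1 :=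
    Matrix.mem_unitaryGroup_iff.mp hP.eigenvectorUnitary.2
  have key : (c : ℂ) • (1 : Matrix (Fin m) (Fin m) ℂ) - P
      = (hP.eigenvectorUnitary : Matrix (Fin m) (Fin m) ℂ) *
        diagonal (fun i => (c : ℂ) - (hP.eigenvalues i : ℂ)) *
        star (hP.eigenvectorUnitary : Matrix (Fin m) (Fin m) ℂ) := by
    have hs := hP.spectral_theorem
    have h1 : (c : ℂ) • (1 : Matrix (Fin m) (Fin m) ℂ)
        = (hP.eigenvectorUnitary : Matrix (Fin m) (Fin m) ℂ) *
          diagonal (fun _ : Fin m => (c : ℂ)) *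
          star (hP.eigenvectorUnitary : Matrix (Fin m) (Fin m) ℂ) := by
      have hd : (diagonal (fun _ : Fin m => (c : ℂ))) = (c : ℂ) • 1 := by
        ext i j
        by_cases h' : i = j <;> simp [h', diagonal_apply]
      rw [hd, Matrix.mul_smul, Matrix.mul_one, Matrix.smul_mul, hV]
    have hd2 : (diagonal (fun i => (c : ℂ) - (hP.eigenvalues i : ℂ)))
        = diagonal (fun _ : Fin m => (c : ℂ)) - diagonal (RCLike.ofReal ∘ hP.eigenvalues) := by
      rw [diagonal_sub]; rfl
    rw [hd2, Matrix.mul_sub, Matrix.sub_mul, ← h1]; congr 1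
  rw [key]
  apply Matrix.PosSemidef.mul_mul_conjTranspose_same
  refine posSemidef_diagonal_iff.mpr fun i => ?_
  rw [← Complex.ofReal_sub, Complex.zero_le_real]
  linarith [h i]

lemma key_lemma {n k : ℕ}
    (A Ap An : Matrix (Fin n) (Fin n) ℂ) (hA : A.IsHermitian)
    (hAp : Ap.PosSemidef) (hAn : An.PosSemidef) (hJA : A = Ap - An)
    (B Bp Bn : Matrix (Fin k) (Fin k) ℂ) (hB : B.IsHermitian)
    (hBp : Bp.PosSemidef) (hBn : Bn.PosSemidef) (hJB : B = Bp - Bn) (hOB : Bp * Bn = 0)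
    (Φ : Herm n →ₗ[ℝ] Herm k) (hpos : IsPositiveMap Φ) (hunital : Φ 1 = 1)
    (hΦ : Φ ⟨A, hA⟩ = ⟨B, hB⟩) :
    opN hBp.1 ≤ opN hAp.1 := by
  set c : ℝ := opN hAp.1 with hc
  have hbdd : BddAbove (Set.range fun i => |hAp.1.eigenvalues i|) :=
    Set.Finite.bddAbove (Set.finite_range _)
  have hc0 : 0 ≤ c := Real.iSup_nonneg fun i => abs_nonneg _
  have hApEig : ∀ i, hAp.1.eigenvalues i ≤ c :=
    fun i => (le_abs_self _).trans (le_ciSup hbdd i)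
  -- c•1 - A is PSD
  have h1 : ((c : ℂ) • (1 : Matrix (Fin n) (Fin n) ℂ) - A).PosSemidef := by
    have h2 := smul_one_sub_psd hAp.1 hApEig
    have : (c : ℂ) • (1 : Matrix (Fin n) (Fin n) ℂ) - A
        = ((c : ℂ) • 1 - Ap) + An := by rw [hJA]; abel
    rw [this]
    exact h2.add hAn
  -- transfer through Φ
  have hXA : ((c • (1 : Herm n) - ⟨A, hA⟩ : Herm n) : Matrix (Fin n) (Fin n) ℂ)
      = (c : ℂ) • (1 : Matrix (Fin n) (Fin n) ℂ) - A := by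
    push_cast
    rw [real_smul_mat]
  have hM : ((c : ℂ) • (1 : Matrix (Fin k) (Fin k) ℂ) - B).PosSemidef := by
    have := hpos (c • (1 : Herm n) - ⟨A, hA⟩) (by rw [hXA]; exact h1)
    rw [map_sub, _root_.map_smul, hunital, hΦ] at this
    have hXB : ((c • (1 : Herm k) - ⟨B, hB⟩ : Herm k) : Matrix (Fin k) (Fin k) ℂ)
        = (c : ℂ) • (1 : Matrix (Fin k) (Fin k) ℂ) - B := by
      push_cast
      rw [real_smul_mat]
    rwa [hXB] at this
  -- each eigenvalue of Bp is ≤ c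
  have hOB' : Bn * Bp = 0 := by
    have := congrArg conjTranspose hOB
    rwa [conjTranspose_mul, hBp.1, hBn.1, conjTranspose_zero] at this
  have hEig : ∀ i, hBp.1.eigenvalues i ≤ c := by
    intro i
    set lam : ℝ := hBp.1.eigenvalues i with hlam
    by_cases hl : lam = 0
    · rw [hl]; exact hc0
    · set v : Fin k → ℂ := ⇑(hBp.1.eigenvectorBasis i) with hv
      have hBpv : Bp *ᵥ v = (lam : ℂ) • v := by
        have := hBp.1.mulVec_eigenvectorBasis i
        rw [← hv, ← hlam] at this
        rw [this]
        ext j; simp [Complex.real_smul]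
      have hBnv : Bn *ᵥ v = 0 := by
        have h0 : Bn *ᵥ (Bp *ᵥ v) = 0 := by
          rw [mulVec_mulVec, hOB', zero_mulVec]
        rw [hBpv, mulVec_smul] at h0
        have := smul_eq_zero.mp h0
        rcases this with h | h
        · exact absurd (Complex.ofReal_eq_zero.mp h) hl
        · exact h
      have hBv : B *ᵥ v = (lam : ℂ) • v := by
        rw [hJB, sub_mulVec, hBpv, hBnv, sub_zero]
      have hvv : dotProduct (star v) v = 1 := by
        have hnorm := hBp.1.eigenvectorBasis.orthonormal.1 i
        have h2 : (inner ℂ (hBp.1.eigenvectorBasis i) (hBp.1.eigenvectorBasis i) : ℂ) = 1 := by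
          rw [inner_self_eq_norm_sq_to_K, hnorm]; norm_num
        rw [EuclideanSpace.inner_eq_star_dotProduct] at h2
        rw [dotProduct_comm]; exact h2
      have hq := hM.dotProduct_mulVec_nonneg v
      have hcomp : dotProduct (star v) (((c : ℂ) • (1 : Matrix (Fin k) (Fin k) ℂ) - B) *ᵥ v)
          = (c : ℂ) - (lam : ℂ) := by
        rw [sub_mulVec, smul_mulVec, one_mulVec, hBv, dotProduct_sub,
          dotProduct_smul, dotProduct_smul, hvv]
        simp
      rw [hcomp] at hq
      rw [← Complex.ofReal_sub, Complex.zero_le_real] at hq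
      linarith
  unfold opN
  refine Real.iSup_le (fun i => ?_) hc0
  rw [abs_of_nonneg (hBp.eigenvalues_nonneg i)]
  exact hEig i

/-- if a positive unital map sends `A` to `B`, then
`‖A₊‖_∞ ≥ ‖B₊‖_∞` and `‖A₋‖_∞ ≥ ‖B₋‖_∞`. -/
theorem stmt5 (n k : ℕ)
    (A Ap An : Matrix (Fin n) (Fin n) ℂ) (hA : A.IsHermitian)
    (hAp : Ap.PosSemidef) (hAn : An.PosSemidef) (hJA : A = Ap - An) (hOA : Ap * An = 0)
    (B Bp Bn : Matrix (Fin k) (Fin k) ℂ) (hB : B.IsHermitian)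
    (hBp : Bp.PosSemidef) (hBn : Bn.PosSemidef) (hJB : B = Bp - Bn) (hOB : Bp * Bn = 0)
    (Φ : Herm n →ₗ[ℝ] Herm k) (hpos : IsPositiveMap Φ) (hunital : Φ 1 = 1)
    (hΦ : Φ ⟨A, hA⟩ = ⟨B, hB⟩) :
    opN hBp.1 ≤ opN hAp.1 ∧ opN hBn.1 ≤ opN hAn.1 := by
  constructor
  · exact key_lemma A Ap An hA hAp hAn hJA B Bp Bn hB hBp hBn hJB hOB Φ hpos hunital hΦ
  · have hOA' : An * Ap = 0 := by
      have := congrArg conjTranspose hOA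
      rwa [conjTranspose_mul, hAp.1, hAn.1, conjTranspose_zero] at this
    have hOB' : Bn * Bp = 0 := by
      have := congrArg conjTranspose hOB
      rwa [conjTranspose_mul, hBp.1, hBn.1, conjTranspose_zero] at this
    have hJA' : -A = An - Ap := by rw [hJA]; abel
    have hJB' : -B = Bn - Bp := by rw [hJB]; abel
    have hΦ' : Φ ⟨-A, hA.neg⟩ = ⟨-B, hB.neg⟩ := by
      have h1 : (⟨-A, hA.neg⟩ : Herm n) = -⟨A, hA⟩ := by ext; simp
      have h2 : (⟨-B, hB.neg⟩ : Herm k) = -⟨B, hB⟩ := by ext; simp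
      rw [h1, h2, map_neg, hΦ]
    exact key_lemma (-A) An Ap hA.neg hAn hAp hJA' (-B) Bn Bp hB.neg hBn hBp hJB' hOB'
      Φ hpos hunital hΦ'
end

section
/- If there exists a positive trace-preserving linear map Φ: H_n → H_k with Φ(A) = B for Hermitian A, B, then tr A = tr B, ‖A₊‖_1 ≥ ‖B₊‖_1, and ‖A₋‖_1 ≥ ‖B₋‖_1. -/
open Matrix
open scoped ComplexOrder

section Aux
open scoped ComplexOrder

lemma trace_nonneg' {m : ℕ} {X : Matrix (Fin m) (Fin m) ℂ} (hX : X.PosSemidef) : 0 ≤ X.trace := by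
  rw [Matrix.trace]
  apply Finset.sum_nonneg
  intro i _
  have := hX.diag_nonneg (i := i)
  simpa [dotProduct, Pi.single_apply, Finset.sum_ite_eq] using this

open scoped Matrix.Norms.L2Operator MatrixOrder in
lemma trace_mul_nonneg' {m : ℕ} {X Y : Matrix (Fin m) (Fin m) ℂ}
    (hX : X.PosSemidef) (hY : Y.PosSemidef) : 0 ≤ (X * Y).trace := by
  obtain ⟨M, rfl⟩ := CStarAlgebra.nonneg_iff_eq_star_mul_self.mp hX.nonneg
  rw [mul_assoc, Matrix.trace_mul_comm]
  exact trace_nonneg' ((hY.mul_mul_conjTranspose_same M))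

lemma trace_psd_le_of_sub {m : ℕ} {Bp Bn C D : Matrix (Fin m) (Fin m) ℂ}
    (hBp : Bp.PosSemidef) (hBn : Bn.PosSemidef) (hOB : Bp * Bn = 0)
    (hC : C.PosSemidef) (hD : D.PosSemidef) (hCD : Bp - Bn = C - D) :
    Bp.trace ≤ C.trace := by
  set hH := hBp.1 with hHdef
  set U : Matrix (Fin m) (Fin m) ℂ := (Matrix.IsHermitian.eigenvectorUnitary hH : Matrix (Fin m) (Fin m) ℂ) with hUdef
  have hU1 : star U * U = 1 := hH.eigenvectorUnitary.2.1
  have hU2 : U * star U = 1 := hH.eigenvectorUnitary.2.2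
  set lc : Fin m → ℂ := fun i => (hH.eigenvalues i : ℂ) with hlc
  set d : Fin m → ℂ := fun i => if hH.eigenvalues i = 0 then 0 else 1 with hd
  set g : Fin m → ℂ := fun i => if hH.eigenvalues i = 0 then 0 else (hH.eigenvalues i : ℂ)⁻¹ with hg
  set P : Matrix (Fin m) (Fin m) ℂ := U * diagonal d * star U with hPdef
  have hspec : Bp = U * diagonal lc * star U := hH.spectral_theorem
  have mulUD : ∀ a b : Fin m → ℂ,
      (U * diagonal a * star U) * (U * diagonal b * star U) = U * diagonal (a * b) * star U := by
    intro a b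
    have h : star U * (U * (diagonal b * star U)) = diagonal b * star U := by
      rw [← mul_assoc, hU1, one_mul]
    simp only [mul_assoc]
    rw [h, ← mul_assoc (diagonal a), Matrix.diagonal_mul_diagonal]
    rfl
  have hP : P.PosSemidef := by
    rw [hPdef, Matrix.star_eq_conjTranspose]
    refine Matrix.PosSemidef.mul_mul_conjTranspose_same ?_ U
    refine Matrix.posSemidef_diagonal_iff.mpr fun i => ?_
    by_cases h : hH.eigenvalues i = 0 <;> simp [hd, h]
  have h1P : (1 - P).PosSemidef := by
    have expand : U * diagonal (fun i => 1 - d i) * star U = 1 - P := by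
      have hdg : diagonal (fun i => (1:ℂ) - d i) = 1 - diagonal d := by
        rw [← Matrix.diagonal_one, Matrix.diagonal_sub]
      rw [hdg, Matrix.mul_sub, Matrix.sub_mul, mul_one, hU2, hPdef]
    rw [← expand, Matrix.star_eq_conjTranspose]
    refine Matrix.PosSemidef.mul_mul_conjTranspose_same ?_ U
    refine Matrix.posSemidef_diagonal_iff.mpr fun i => ?_
    by_cases h : hH.eigenvalues i = 0 <;> simp [hd, h]
  have hPBp : P * Bp = Bp := by
    rw [hPdef, hspec, mulUD]
    have : d * lc = lc := by
      funext i
      by_cases h : hH.eigenvalues i = 0 <;> simp [hd, hlc, h]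
    rw [this]
  have hPBn : P * Bn = 0 := by
    have hQ : P = (U * diagonal g * star U) * Bp := by
      rw [hspec, hPdef, mulUD]
      have : g * lc = d := by
        funext i
        by_cases h : hH.eigenvalues i = 0
        · simp [hd, hg, hlc, h]
        · simp [hd, hg, hlc, h,
            inv_mul_cancel₀ (by exact_mod_cast h : (hH.eigenvalues i : ℂ) ≠ 0)]
      rw [this]
    rw [hQ, mul_assoc, hOB, mul_zero]
  have key : Bp.trace = (P * C).trace - (P * D).trace := by
    calc Bp.trace = (P * Bp).trace - (P * Bn).trace := by rw [hPBp, hPBn]; simp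
    _ = (P * (Bp - Bn)).trace := by rw [Matrix.mul_sub, Matrix.trace_sub]
    _ = (P * (C - D)).trace := by rw [hCD]
    _ = (P * C).trace - (P * D).trace := by rw [Matrix.mul_sub, Matrix.trace_sub]
  have h1 : 0 ≤ (P * D).trace := trace_mul_nonneg' hP hD
  have h2 : (P * C).trace ≤ C.trace := by
    have h3 : 0 ≤ ((1 - P) * C).trace := trace_mul_nonneg' h1P hC
    rw [Matrix.sub_mul, Matrix.trace_sub, one_mul] at h3
    exact sub_nonneg.mp h3
  calc Bp.trace = (P * C).trace - (P * D).trace := key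
  _ ≤ (P * C).trace := sub_le_self _ h1
  _ ≤ C.trace := h2


lemma trN_psd_eq_re_trace {m : ℕ} {X : Matrix (Fin m) (Fin m) ℂ} (hX : X.PosSemidef) :
    trN hX.1 = X.trace.re := by
  have hH := hX.1
  have hspec := hH.spectral_theorem
  have htr : X.trace = ∑ i, (hH.eigenvalues i : ℂ) := by
    conv_lhs => rw [hspec]
    rw [Unitary.conjStarAlgAut_apply, Matrix.trace_mul_cycle]
    have hU1 : star (hH.eigenvectorUnitary : Matrix (Fin m) (Fin m) ℂ) *
        (hH.eigenvectorUnitary : Matrix (Fin m) (Fin m) ℂ) = 1 := hH.eigenvectorUnitary.2.1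
    rw [hU1, one_mul, Matrix.trace_diagonal]
    rfl
  rw [trN, htr]
  rw [Complex.re_sum]
  exact Finset.sum_congr rfl fun i _ => by
    rw [Complex.ofReal_re, abs_of_nonneg (hX.eigenvalues_nonneg i)]

end Aux

/-- if a positive trace-preserving map sends `A` to `B`, then
`tr A = tr B`, `‖A₊‖_1 ≥ ‖B₊‖_1` and `‖A₋‖_1 ≥ ‖B₋‖_1`. -/
theorem stmt6 (n k : ℕ)
    (A Ap An : Matrix (Fin n) (Fin n) ℂ) (hA : A.IsHermitian)
    (hAp : Ap.PosSemidef) (hAn : An.PosSemidef) (hJA : A = Ap - An) (hOA : Ap * An = 0)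
    (B Bp Bn : Matrix (Fin k) (Fin k) ℂ) (hB : B.IsHermitian)
    (hBp : Bp.PosSemidef) (hBn : Bn.PosSemidef) (hJB : B = Bp - Bn) (hOB : Bp * Bn = 0)
    (Φ : Herm n →ₗ[ℝ] Herm k) (hpos : IsPositiveMap Φ) (htp : IsTracePreserving Φ)
    (hΦ : Φ ⟨A, hA⟩ = ⟨B, hB⟩) :
    A.trace = B.trace ∧ trN hBp.1 ≤ trN hAp.1 ∧ trN hBn.1 ≤ trN hAn.1 := by
  have htr := htp ⟨A, hA⟩
  rw [hΦ] at htr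
  set C : Matrix (Fin k) (Fin k) ℂ := (Φ ⟨Ap, hAp.1⟩ : Matrix (Fin k) (Fin k) ℂ) with hCdef
  set D : Matrix (Fin k) (Fin k) ℂ := (Φ ⟨An, hAn.1⟩ : Matrix (Fin k) (Fin k) ℂ) with hDdef
  have hC : C.PosSemidef := hpos _ hAp
  have hD : D.PosSemidef := hpos _ hAn
  have hsub : (⟨A, hA⟩ : Herm n) = ⟨Ap, hAp.1⟩ - ⟨An, hAn.1⟩ := Subtype.ext (by simpa using hJA)
  have hBCD : Bp - Bn = C - D := by
    have h1 : Φ ⟨A, hA⟩ = Φ ⟨Ap, hAp.1⟩ - Φ ⟨An, hAn.1⟩ := by rw [hsub, map_sub]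
    have h2 := congrArg (fun x : Herm k => (x : Matrix (Fin k) (Fin k) ℂ)) h1
    simp only [hΦ] at h2
    rw [← hJB]
    exact h2
  have hOB' : Bn * Bp = 0 := by
    have := congrArg Matrix.conjTranspose hOB
    rwa [Matrix.conjTranspose_mul, hBn.1.eq, hBp.1.eq, Matrix.conjTranspose_zero] at this
  have hCtr : C.trace = Ap.trace := htp ⟨Ap, hAp.1⟩
  have hDtr : D.trace = An.trace := htp ⟨An, hAn.1⟩
  have hle1 : Bp.trace ≤ C.trace := trace_psd_le_of_sub hBp hBn hOB hC hD hBCD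
  have hle2 : Bn.trace ≤ D.trace :=
    trace_psd_le_of_sub hBn hBp hOB' hD hC (by rw [← neg_sub Bp, hBCD, neg_sub])
  refine ⟨htr.symm, ?_, ?_⟩
  · rw [trN_psd_eq_re_trace hBp, trN_psd_eq_re_trace hAp, ← hCtr]
    exact (Complex.le_def.mp hle1).1
  · rw [trN_psd_eq_re_trace hBn, trN_psd_eq_re_trace hAn, ← hDtr]
    exact (Complex.le_def.mp hle2).1
end

section
/- Let A ∈ H_n and B ∈ H_k be Hermitian matrices, each neither positive nor negative semidefinite, with ‖A₊‖_∞ = ‖B₊‖_∞ and ‖A₋‖_∞ = ‖B₋‖_∞. Then there exists a positive unital linear map Φ: H_n → H_k with Φ(A) = B, and a positive unital linear map Φ': H_k → H_n with Φ'(B) = A. -/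
open Matrix
open scoped ComplexOrder

noncomputable section
namespace Stmt7Aux

variable {m : ℕ}

lemma rsmul_eq (r : ℝ) (M : Matrix (Fin m) (Fin m) ℂ) : r • M = (r : ℂ) • M := by
  ext i j; simp [Complex.real_smul]

/-- real scalar multiple of a PSD matrix is PSD -/
lemma psd_real_smul {M : Matrix (Fin m) (Fin m) ℂ} (hM : M.PosSemidef) {r : ℝ}
    (hr : 0 ≤ r) : (r • M).PosSemidef := by
  rw [posSemidef_iff_dotProduct_mulVec]
  constructor
  · unfold Matrix.IsHermitian
    rw [conjTranspose_smul, hM.1.eq]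
    norm_num
  · intro x
    have h := hM.dotProduct_mulVec_nonneg x
    rw [smul_mulVec, dotProduct_smul]
    rw [Complex.le_def] at h ⊢
    constructor
    · simpa [Complex.smul_re] using mul_nonneg hr (by simpa using h.1)
    · simp [Complex.smul_im, ← h.2]

lemma psd_ofReal_smul {M : Matrix (Fin m) (Fin m) ℂ} (hM : M.PosSemidef) {r : ℝ}
    (hr : 0 ≤ r) : ((r : ℂ) • M).PosSemidef := by
  rw [← rsmul_eq]; exact psd_real_smul hM hr

lemma shiftPSD {M : Matrix (Fin m) (Fin m) ℂ} (hM : M.IsHermitian) {c : ℝ}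
    (h : ∀ i, hM.eigenvalues i ≤ c) :
    ((c : ℂ) • (1 : Matrix (Fin m) (Fin m) ℂ) - M).PosSemidef := by
  set U : Matrix (Fin m) (Fin m) ℂ := (hM.eigenvectorUnitary : Matrix (Fin m) (Fin m) ℂ)
  have hU : U * star U = 1 := Matrix.mem_unitaryGroup_iff.mp hM.eigenvectorUnitary.2
  have hdiag : diagonal (fun i => ((c - hM.eigenvalues i : ℝ) : ℂ))
      = (c : ℂ) • (1 : Matrix (Fin m) (Fin m) ℂ)
        - diagonal (RCLike.ofReal ∘ hM.eigenvalues) := by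
    ext i j
    by_cases hij : i = j <;> simp [diagonal, hij, Matrix.one_apply, Complex.ofReal_sub]
  have key : (c : ℂ) • (1 : Matrix (Fin m) (Fin m) ℂ) - M
      = U * diagonal (fun i => ((c - hM.eigenvalues i : ℝ) : ℂ)) * star U := by
    rw [hdiag, Matrix.mul_sub, Matrix.sub_mul]
    rw [show U * ((c : ℂ) • (1 : Matrix (Fin m) (Fin m) ℂ)) * star U
        = (c : ℂ) • (U * star U) by
      rw [Matrix.mul_smul, Matrix.mul_one, Matrix.smul_mul], hU]
    congr 1
    exact hM.spectral_theorem
  rw [key]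
  refine (posSemidef_diagonal_iff.mpr fun i => ?_).mul_mul_conjTranspose_same U
  rw [Complex.zero_le_real]
  linarith [h i]

lemma eq_zero_of_eigs_zero {M : Matrix (Fin m) (Fin m) ℂ} (hM : M.IsHermitian)
    (h : ∀ i, hM.eigenvalues i = 0) : M = 0 := by
  have : diagonal (RCLike.ofReal ∘ hM.eigenvalues) = (0 : Matrix (Fin m) (Fin m) ℂ) := by
    ext i j
    by_cases hij : i = j <;> simp [diagonal, hij, h]
  rw [hM.spectral_theorem, this]
  simp

def sfun (u : Fin m → ℂ) (M : Matrix (Fin m) (Fin m) ℂ) : ℝ :=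
  (star u ⬝ᵥ (M *ᵥ u)).re

lemma sfun_add (u : Fin m → ℂ) (M N : Matrix (Fin m) (Fin m) ℂ) :
    sfun u (M + N) = sfun u M + sfun u N := by
  simp [sfun, add_mulVec, dotProduct_add]

lemma sfun_smul (u : Fin m → ℂ) (r : ℝ) (M : Matrix (Fin m) (Fin m) ℂ) :
    sfun u (r • M) = r * sfun u M := by
  simp [sfun, smul_mulVec, dotProduct_smul, Complex.smul_re]

lemma sfun_nonneg (u : Fin m → ℂ) {M : Matrix (Fin m) (Fin m) ℂ} (h : M.PosSemidef) :
    0 ≤ sfun u M := by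
  have h2 := h.dotProduct_mulVec_nonneg u
  rw [Complex.le_def] at h2
  simpa [sfun] using h2.1

lemma opN_bound {M : Matrix (Fin m) (Fin m) ℂ} (hM : M.IsHermitian) (i : Fin m) :
    |hM.eigenvalues i| ≤ opN hM := by
  exact le_ciSup (f := fun j => |hM.eigenvalues j|) (Set.Finite.bddAbove (Set.finite_range _)) i

lemma key {n k : ℕ}
    (A Ap An : Matrix (Fin n) (Fin n) ℂ) (hA : A.IsHermitian)
    (hA1 : ¬ A.PosSemidef) (hA2 : ¬ (-A).PosSemidef)
    (hAp : Ap.PosSemidef) (hAn : An.PosSemidef) (hJA : A = Ap - An) (hOA : Ap * An = 0)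
    (B Bp Bn : Matrix (Fin k) (Fin k) ℂ) (hB : B.IsHermitian)
    (hBp : Bp.PosSemidef) (hBn : Bn.PosSemidef) (hJB : B = Bp - Bn)
    (heqp : opN hAp.1 = opN hBp.1) (heqn : opN hAn.1 = opN hBn.1) :
    ∃ Φ : Herm n →ₗ[ℝ] Herm k, IsPositiveMap Φ ∧ Φ 1 = 1 ∧ Φ ⟨A, hA⟩ = ⟨B, hB⟩ := by
  -- `Fin n` is nonempty
  have hn : n ≠ 0 := by
    rintro rfl
    exact hA1 (PosSemidef.of_dotProduct_mulVec_nonneg hA fun x => by simp [dotProduct])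
  haveI : Nonempty (Fin n) := ⟨⟨0, Nat.pos_of_ne_zero hn⟩⟩
  set a : ℝ := opN hAp.1 with ha_def
  set c : ℝ := opN hAn.1 with hc_def
  -- a > 0
  obtain ⟨i₀, hi₀⟩ : ∃ i, |hAp.1.eigenvalues i| = a := by
    rw [ha_def]; unfold opN; exact exists_eq_ciSup_of_finite
  have ha0 : 0 ≤ a := hi₀ ▸ abs_nonneg _
  have ha : 0 < a := by
    rcases ha0.lt_or_eq with h | h
    · exact h
    exfalso
    have hzero : Ap = 0 := by
      refine eq_zero_of_eigs_zero hAp.1 fun i => ?_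
      have := opN_bound hAp.1 i
      rw [← ha_def, ← h] at this
      exact abs_nonpos_iff.mp this
    refine hA2 ⟨?_, ?_⟩
    · rw [hJA, hzero]; simpa using hAn.1
    · intro x
      have := hAn.2 x
      rw [hJA, hzero]
      simpa using this
  -- c > 0
  obtain ⟨j₀, hj₀⟩ : ∃ j, |hAn.1.eigenvalues j| = c := by
    rw [hc_def]; unfold opN; exact exists_eq_ciSup_of_finite
  have hc0 : 0 ≤ c := hj₀ ▸ abs_nonneg _
  have hc : 0 < c := by
    rcases hc0.lt_or_eq with h | h
    · exact h
    exfalso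
    have hzero : An = 0 := by
      refine eq_zero_of_eigs_zero hAn.1 fun i => ?_
      have := opN_bound hAn.1 i
      rw [← hc_def, ← h] at this
      exact abs_nonpos_iff.mp this
    refine hA1 ⟨hA, ?_⟩
    intro x
    have := hAp.2 x
    rw [hJA, hzero]
    simpa using this
  have hac : (0:ℝ) < a + c := by linarith
  -- eigenvalues at i₀, j₀
  have hla : hAp.1.eigenvalues i₀ = a := by
    rw [← hi₀, abs_of_nonneg (hAp.eigenvalues_nonneg i₀)]
  have hlc : hAn.1.eigenvalues j₀ = c := by
    rw [← hj₀, abs_of_nonneg (hAn.eigenvalues_nonneg j₀)]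
  -- eigenvectors
  set u : Fin n → ℂ := ⇑(hAp.1.eigenvectorBasis i₀) with hu_def
  set v : Fin n → ℂ := ⇑(hAn.1.eigenvectorBasis j₀) with hv_def
  have hu_eig : Ap *ᵥ u = a • u := by
    rw [hu_def, hAp.1.mulVec_eigenvectorBasis i₀, hla]
  have hv_eig : An *ᵥ v = c • v := by
    rw [hv_def, hAn.1.mulVec_eigenvectorBasis j₀, hlc]
  have hAnAp : An * Ap = 0 := by
    have h2 := congrArg conjTranspose hOA
    rwa [conjTranspose_mul, hAp.1.eq, hAn.1.eq, conjTranspose_zero] at h2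
  have hAn_u : An *ᵥ u = 0 := by
    have h2 : An *ᵥ (Ap *ᵥ u) = 0 := by
      rw [mulVec_mulVec, hAnAp, zero_mulVec]
    rw [hu_eig, mulVec_smul] at h2
    rcases smul_eq_zero.mp h2 with h | h
    · exact absurd h (ne_of_gt ha)
    · exact h
  have hAp_v : Ap *ᵥ v = 0 := by
    have h2 : Ap *ᵥ (An *ᵥ v) = 0 := by
      rw [mulVec_mulVec, hOA, zero_mulVec]
    rw [hv_eig, mulVec_smul] at h2
    rcases smul_eq_zero.mp h2 with h | h
    · exact absurd h (ne_of_gt hc)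
    · exact h
  have hu_A : A *ᵥ u = a • u := by
    rw [hJA, sub_mulVec, hu_eig, hAn_u, sub_zero]
  have hv_A : A *ᵥ v = (-c) • v := by
    rw [hJA, sub_mulVec, hv_eig, hAp_v, neg_smul, zero_sub]
  -- unit vectors
  have hu_one : star u ⬝ᵥ u = 1 := by
    have h2 : (inner ℂ (hAp.1.eigenvectorBasis i₀) (hAp.1.eigenvectorBasis i₀) : ℂ) = 1 := by
      rw [inner_self_eq_norm_sq_to_K, hAp.1.eigenvectorBasis.orthonormal.1 i₀]
      norm_num
    rw [EuclideanSpace.inner_eq_star_dotProduct, dotProduct_comm] at h2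
    exact h2
  have hv_one : star v ⬝ᵥ v = 1 := by
    have h2 : (inner ℂ (hAn.1.eigenvectorBasis j₀) (hAn.1.eigenvectorBasis j₀) : ℂ) = 1 := by
      rw [inner_self_eq_norm_sq_to_K, hAn.1.eigenvectorBasis.orthonormal.1 j₀]
      norm_num
    rw [EuclideanSpace.inner_eq_star_dotProduct, dotProduct_comm] at h2
    exact h2
  -- eigenvalue bounds for B side
  have hBpb : ∀ i, hBp.1.eigenvalues i ≤ a := fun i =>
    (le_abs_self _).trans ((opN_bound hBp.1 i).trans heqp.ge)
  have hBnb : ∀ i, hBn.1.eigenvalues i ≤ c := fun i =>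
    (le_abs_self _).trans ((opN_bound hBn.1 i).trans heqn.ge)
  -- the two PSD matrices R, S
  set Rm : Matrix (Fin k) (Fin k) ℂ :=
    (((a + c)⁻¹ : ℝ) : ℂ) • ((c : ℂ) • 1 + B) with hRm_def
  set Sm : Matrix (Fin k) (Fin k) ℂ :=
    (((a + c)⁻¹ : ℝ) : ℂ) • ((a : ℂ) • 1 - B) with hSm_def
  have hRm : Rm.PosSemidef := by
    refine psd_ofReal_smul ?_ (inv_nonneg.mpr hac.le)
    have h2 : (c : ℂ) • (1 : Matrix (Fin k) (Fin k) ℂ) + B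
        = ((c : ℂ) • 1 - Bn) + Bp := by rw [hJB]; abel
    rw [h2]
    exact (shiftPSD hBn.1 hBnb).add hBp
  have hSm : Sm.PosSemidef := by
    refine psd_ofReal_smul ?_ (inv_nonneg.mpr hac.le)
    have h2 : (a : ℂ) • (1 : Matrix (Fin k) (Fin k) ℂ) - B
        = ((a : ℂ) • 1 - Bp) + Bn := by rw [hJB]; abel
    rw [h2]
    exact (shiftPSD hBp.1 hBpb).add hBn
  set R : Herm k := ⟨Rm, hRm.1⟩ with hR_def
  set S : Herm k := ⟨Sm, hSm.1⟩ with hS_def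
  -- the map
  refine ⟨{ toFun := fun X => sfun u X.val • R + sfun v X.val • S
            map_add' := ?_
            map_smul' := ?_ }, ?_, ?_, ?_⟩
  · intro X Y
    simp only [AddSubgroup.coe_add, sfun_add, add_smul]
    abel
  · intro r X
    have hXv : ((r • X : Herm n) : Matrix (Fin n) (Fin n) ℂ) = r • (X : Matrix (Fin n) (Fin n) ℂ) := rfl
    simp only [hXv, sfun_smul, RingHom.id_apply, smul_add, smul_smul]
  · -- positivity
    intro X hX
    have hval : ((sfun u X.val • R + sfun v X.val • S : Herm k) : Matrix (Fin k) (Fin k) ℂ)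
        = sfun u X.val • Rm + sfun v X.val • Sm := rfl
    show ((sfun u X.val • R + sfun v X.val • S : Herm k) : Matrix (Fin k) (Fin k) ℂ).PosSemidef
    rw [hval]
    exact (psd_real_smul hRm (sfun_nonneg u hX)).add (psd_real_smul hSm (sfun_nonneg v hX))
  · -- unitality
    apply Subtype.ext
    have h1 : sfun u ((1 : Herm n) : Matrix (Fin n) (Fin n) ℂ) = 1 := by
      have : ((1 : Herm n) : Matrix (Fin n) (Fin n) ℂ) = 1 := rfl
      rw [this]
      simp [sfun, one_mulVec, hu_one]
    have h2 : sfun v ((1 : Herm n) : Matrix (Fin n) (Fin n) ℂ) = 1 := by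
      have : ((1 : Herm n) : Matrix (Fin n) (Fin n) ℂ) = 1 := rfl
      rw [this]
      simp [sfun, one_mulVec, hv_one]
    show sfun u ((1 : Herm n) : Matrix _ _ ℂ) • Rm + sfun v ((1 : Herm n) : Matrix _ _ ℂ) • Sm
        = (1 : Matrix (Fin k) (Fin k) ℂ)
    rw [h1, h2, one_smul, one_smul, hRm_def, hSm_def, ← smul_add]
    have h3 : ((c : ℂ) • (1 : Matrix (Fin k) (Fin k) ℂ) + B) + ((a : ℂ) • 1 - B)
        = (((a + c : ℝ)) : ℂ) • (1 : Matrix (Fin k) (Fin k) ℂ) := by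
      push_cast
      rw [add_smul]
      abel
    rw [h3, smul_smul, ← Complex.ofReal_mul, inv_mul_cancel₀ (ne_of_gt hac)]
    simp
  · -- maps A to B
    apply Subtype.ext
    have h1 : sfun u A = a := by
      simp [sfun, hu_A, dotProduct_smul, hu_one, Complex.smul_re]
    have h2 : sfun v A = -c := by
      simp [sfun, hv_A, dotProduct_smul, hv_one, Complex.smul_re]
    show sfun u A • Rm + sfun v A • Sm = B
    rw [h1, h2, rsmul_eq, rsmul_eq, hRm_def, hSm_def, smul_comm (a : ℂ), smul_comm ((-c : ℝ) : ℂ),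
      ← smul_add]
    have h3 : (a : ℂ) • ((c : ℂ) • (1 : Matrix (Fin k) (Fin k) ℂ) + B)
        + ((-c : ℝ) : ℂ) • ((a : ℂ) • 1 - B) = (((a + c : ℝ)) : ℂ) • B := by
      push_cast
      match_scalars <;> ring
    rw [h3, smul_smul, ← Complex.ofReal_mul, inv_mul_cancel₀ (ne_of_gt hac), Complex.ofReal_one,
      one_smul]

end Stmt7Aux
end

/-- if `A`, `B` are indefinite Hermitian matrices with
`‖A₊‖_∞ = ‖B₊‖_∞` and `‖A₋‖_∞ = ‖B₋‖_∞`, then there are positive unital maps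
sending `A` to `B` and `B` to `A`. -/
theorem stmt7 (n k : ℕ)
    (A Ap An : Matrix (Fin n) (Fin n) ℂ) (hA : A.IsHermitian)
    (hA1 : ¬ A.PosSemidef) (hA2 : ¬ (-A).PosSemidef)
    (hAp : Ap.PosSemidef) (hAn : An.PosSemidef) (hJA : A = Ap - An) (hOA : Ap * An = 0)
    (B Bp Bn : Matrix (Fin k) (Fin k) ℂ) (hB : B.IsHermitian)
    (hB1 : ¬ B.PosSemidef) (hB2 : ¬ (-B).PosSemidef)
    (hBp : Bp.PosSemidef) (hBn : Bn.PosSemidef) (hJB : B = Bp - Bn) (hOB : Bp * Bn = 0)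
    (heqp : opN hAp.1 = opN hBp.1) (heqn : opN hAn.1 = opN hBn.1) :
    (∃ Φ : Herm n →ₗ[ℝ] Herm k, IsPositiveMap Φ ∧ Φ 1 = 1 ∧ Φ ⟨A, hA⟩ = ⟨B, hB⟩) ∧
    (∃ Φ' : Herm k →ₗ[ℝ] Herm n, IsPositiveMap Φ' ∧ Φ' 1 = 1 ∧ Φ' ⟨B, hB⟩ = ⟨A, hA⟩) := by
  constructor
  · exact Stmt7Aux.key A Ap An hA hA1 hA2 hAp hAn hJA hOA B Bp Bn hB hBp hBn hJB heqp heqn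
  · exact Stmt7Aux.key B Bp Bn hB hB1 hB2 hBp hBn hJB hOB A Ap An hA hAp hAn hJA heqp.symm heqn.symm
end

section
/- Let A, B be Hermitian matrices of sizes n and k. There exists a positive unital linear map Φ: H_n → H_k with Φ(A) = B if and only if λ_max(A) ≥ λ_max(B) and λ_min(A) ≤ λ_min(B). -/
open Matrix
open scoped ComplexOrder

section Stmt11Aux

variable {m : ℕ}

private lemma rsmul_eq (r : ℝ) (M : Matrix (Fin m) (Fin m) ℂ) : r • M = (r : ℂ) • M := by
  ext i j; simp [Matrix.smul_apply, Complex.real_smul]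

private lemma psd_real_smul {M : Matrix (Fin m) (Fin m) ℂ} (hM : M.PosSemidef)
    {r : ℝ} (hr : 0 ≤ r) : (r • M).PosSemidef := by
  rw [rsmul_eq]
  refine ⟨?_, fun x => ?_⟩
  · unfold Matrix.IsHermitian
    rw [conjTranspose_smul, hM.1.eq]
    congr 1
    simp [Complex.conj_ofReal]
  · exact (hM.smul (Complex.zero_le_real.2 hr)).2 x

private lemma psd_smul_sub {M : Matrix (Fin m) (Fin m) ℂ} (hM : M.IsHermitian) {c : ℝ}
    (h : ∀ i, hM.eigenvalues i ≤ c) : ((c:ℂ) • 1 - M).PosSemidef := by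
  have key : (c:ℂ) • (1 : Matrix (Fin m) (Fin m) ℂ) - M =
      (hM.eigenvectorUnitary : Matrix (Fin m) (Fin m) ℂ) *
        diagonal (fun i => (c : ℂ) - hM.eigenvalues i) *
        ((hM.eigenvectorUnitary : Matrix (Fin m) (Fin m) ℂ))ᴴ := by
    have hd : diagonal (fun i => (c : ℂ) - hM.eigenvalues i) =
        (c:ℂ) • (1 : Matrix (Fin m) (Fin m) ℂ) - diagonal (RCLike.ofReal ∘ hM.eigenvalues) := by
      ext a b
      rcases eq_or_ne a b with hab | hab <;>
        simp [Matrix.diagonal_apply, hab, Matrix.one_apply, Matrix.smul_apply, Matrix.sub_apply]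
    rw [hd, Matrix.mul_sub, Matrix.sub_mul, ← Matrix.star_eq_conjTranspose]
    rw [mul_smul_comm, mul_one, smul_mul_assoc,
      (Matrix.mem_unitaryGroup_iff).mp hM.eigenvectorUnitary.2]
    congr 1
    exact hM.spectral_theorem
  rw [key]
  refine (posSemidef_diagonal_iff.mpr fun i => ?_).mul_mul_conjTranspose_same _
  have : ((c - hM.eigenvalues i : ℝ) : ℂ) = (c:ℂ) - hM.eigenvalues i := by push_cast; ring
  rw [← this]
  exact Complex.zero_le_real.2 (by linarith [h i])

private lemma psd_sub_smul {M : Matrix (Fin m) (Fin m) ℂ} (hM : M.IsHermitian) {c : ℝ}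
    (h : ∀ i, c ≤ hM.eigenvalues i) : (M - (c:ℂ) • 1).PosSemidef := by
  have key : M - (c:ℂ) • (1 : Matrix (Fin m) (Fin m) ℂ) =
      (hM.eigenvectorUnitary : Matrix (Fin m) (Fin m) ℂ) *
        diagonal (fun i => (hM.eigenvalues i : ℂ) - c) *
        ((hM.eigenvectorUnitary : Matrix (Fin m) (Fin m) ℂ))ᴴ := by
    have hd : diagonal (fun i => (hM.eigenvalues i : ℂ) - c) =
        diagonal (RCLike.ofReal ∘ hM.eigenvalues) - (c:ℂ) • (1 : Matrix (Fin m) (Fin m) ℂ) := by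
      ext a b
      rcases eq_or_ne a b with hab | hab <;>
        simp [Matrix.diagonal_apply, hab, Matrix.one_apply, Matrix.smul_apply, Matrix.sub_apply]
    rw [hd, Matrix.mul_sub, Matrix.sub_mul, ← Matrix.star_eq_conjTranspose]
    rw [mul_smul_comm, mul_one, smul_mul_assoc,
      (Matrix.mem_unitaryGroup_iff).mp hM.eigenvectorUnitary.2]
    congr 1
    exact hM.spectral_theorem
  rw [key]
  refine (posSemidef_diagonal_iff.mpr fun i => ?_).mul_mul_conjTranspose_same _
  have : ((hM.eigenvalues i - c : ℝ) : ℂ) = (hM.eigenvalues i : ℂ) - c := by push_cast; ring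
  rw [← this]
  exact Complex.zero_le_real.2 (by linarith [h i])

private lemma evec_norm {M : Matrix (Fin m) (Fin m) ℂ} (hM : M.IsHermitian) (i : Fin m) :
    star ⇑(hM.eigenvectorBasis i) ⬝ᵥ ⇑(hM.eigenvectorBasis i) = 1 := by
  have h := EuclideanSpace.inner_eq_star_dotProduct (hM.eigenvectorBasis i) (hM.eigenvectorBasis i)
  rw [inner_self_eq_norm_sq_to_K, hM.eigenvectorBasis.orthonormal.1 i] at h
  rw [dotProduct_comm]
  simpa using h.symm

private lemma eig_eq {M : Matrix (Fin m) (Fin m) ℂ} (hM : M.IsHermitian) (i : Fin m) :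
    star ⇑(hM.eigenvectorBasis i) ⬝ᵥ M *ᵥ ⇑(hM.eigenvectorBasis i) = (hM.eigenvalues i : ℂ) := by
  rw [hM.mulVec_eigenvectorBasis, dotProduct_smul, evec_norm hM i]
  simp [Complex.real_smul]

private lemma eig_le_of_psd {M : Matrix (Fin m) (Fin m) ℂ} (hM : M.IsHermitian) {c : ℝ}
    (h : ((c:ℂ) • 1 - M).PosSemidef) (i : Fin m) : hM.eigenvalues i ≤ c := by
  have h2 := h.re_dotProduct_nonneg ⇑(hM.eigenvectorBasis i)
  have hin : star ⇑(hM.eigenvectorBasis i) ⬝ᵥ ((c:ℂ) • 1 - M) *ᵥ ⇑(hM.eigenvectorBasis i)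
      = ((c - hM.eigenvalues i : ℝ) : ℂ) := by
    rw [sub_mulVec, dotProduct_sub, smul_mulVec, one_mulVec, dotProduct_smul,
      evec_norm hM i, smul_eq_mul, mul_one, eig_eq hM i]
    push_cast; ring
  rw [hin] at h2
  simp only [RCLike.re_to_complex, Complex.ofReal_re] at h2
  linarith

private lemma eig_ge_of_psd {M : Matrix (Fin m) (Fin m) ℂ} (hM : M.IsHermitian) {c : ℝ}
    (h : (M - (c:ℂ) • 1).PosSemidef) (i : Fin m) : c ≤ hM.eigenvalues i := by
  have h2 := h.re_dotProduct_nonneg ⇑(hM.eigenvectorBasis i)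
  have hin : star ⇑(hM.eigenvectorBasis i) ⬝ᵥ (M - (c:ℂ) • 1) *ᵥ ⇑(hM.eigenvectorBasis i)
      = ((hM.eigenvalues i - c : ℝ) : ℂ) := by
    rw [sub_mulVec, dotProduct_sub, smul_mulVec, one_mulVec, dotProduct_smul,
      evec_norm hM i, smul_eq_mul, mul_one, eig_eq hM i]
    push_cast; ring
  rw [hin] at h2
  simp only [RCLike.re_to_complex, Complex.ofReal_re] at h2
  linarith

/-- The positive unital functional `X ↦ Re (u∗ X u)`. -/
private noncomputable def phi (u : Fin m → ℂ) : Herm m →ₗ[ℝ] ℝ where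
  toFun X := (star u ⬝ᵥ (X : Matrix (Fin m) (Fin m) ℂ) *ᵥ u).re
  map_add' X Y := by simp [Matrix.add_mulVec, dotProduct_add]
  map_smul' r X := by
    simp [selfAdjoint.val_smul, smul_mulVec, dotProduct_smul, Complex.real_smul]

private lemma phi_apply (u : Fin m → ℂ) (X : Herm m) :
    phi u X = (star u ⬝ᵥ (X : Matrix (Fin m) (Fin m) ℂ) *ᵥ u).re := rfl

private lemma phi_nonneg (u : Fin m → ℂ) {X : Herm m}
    (h : (X : Matrix (Fin m) (Fin m) ℂ).PosSemidef) : 0 ≤ phi u X := by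
  have := h.re_dotProduct_nonneg u
  simpa [phi_apply, RCLike.re_to_complex] using this

private lemma phi_one {u : Fin m → ℂ} (hu : star u ⬝ᵥ u = 1) : phi u (1 : Herm m) = 1 := by
  simp [phi_apply, selfAdjoint.val_one, hu]

private lemma comb1 {V : Type*} [AddCommGroup V] [Module ℝ V] (a b : ℝ) (x e : V) :
    (a - b)⁻¹ • (x - b • e) + (a - b)⁻¹ • (a • e - x) = ((a - b)⁻¹ * (a - b)) • e := by
  module

private lemma comb2 {V : Type*} [AddCommGroup V] [Module ℝ V] (a b : ℝ) (x e : V) :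
    a • ((a - b)⁻¹ • (x - b • e)) + b • ((a - b)⁻¹ • (a • e - x))
      = ((a - b)⁻¹ * (a - b)) • x := by
  module

end Stmt11Aux

/-- a positive unital map sending `A` to `B` exists iff
`λ_max(A) ≥ λ_max(B)` and `λ_min(A) ≤ λ_min(B)`. -/
theorem stmt11 (n k : ℕ) (hn : 0 < n) (hk : 0 < k)
    (A : Matrix (Fin n) (Fin n) ℂ) (hA : A.IsHermitian)
    (B : Matrix (Fin k) (Fin k) ℂ) (hB : B.IsHermitian) :
    (∃ Φ : Herm n →ₗ[ℝ] Herm k, IsPositiveMap Φ ∧ Φ 1 = 1 ∧ Φ ⟨A, hA⟩ = ⟨B, hB⟩) ↔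
      lmax hB ≤ lmax hA ∧ lmin hA ≤ lmin hB := by
  haveI : Nonempty (Fin n) := ⟨⟨0, hn⟩⟩
  haveI : Nonempty (Fin k) := ⟨⟨0, hk⟩⟩
  have bddA : BddAbove (Set.range hA.eigenvalues) := (Set.finite_range _).bddAbove
  have bddA' : BddBelow (Set.range hA.eigenvalues) := (Set.finite_range _).bddBelow
  have bddB : BddAbove (Set.range hB.eigenvalues) := (Set.finite_range _).bddAbove
  have bddB' : BddBelow (Set.range hB.eigenvalues) := (Set.finite_range _).bddBelow
  constructor
  · rintro ⟨Φ, hpos, hone, hAB⟩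
    constructor
    · refine ciSup_le fun j => ?_
      have h1 : ((lmax hA : ℂ) • 1 - A).PosSemidef :=
        psd_smul_sub hA fun i => le_ciSup bddA i
      have hcoe : ((lmax hA • 1 - ⟨A, hA⟩ : Herm n) : Matrix (Fin n) (Fin n) ℂ)
          = (lmax hA : ℂ) • 1 - A := by
        rw [AddSubgroup.coe_sub, selfAdjoint.val_smul, selfAdjoint.val_one,
          rsmul_eq (lmax hA) (1 : Matrix (Fin n) (Fin n) ℂ)]
      have h2 := hpos (lmax hA • 1 - ⟨A, hA⟩) (by rw [hcoe]; exact h1)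
      rw [map_sub, LinearMap.map_smul, hone, hAB] at h2
      have hcoe2 : ((lmax hA • 1 - ⟨B, hB⟩ : Herm k) : Matrix (Fin k) (Fin k) ℂ)
          = (lmax hA : ℂ) • 1 - B := by
        rw [AddSubgroup.coe_sub, selfAdjoint.val_smul, selfAdjoint.val_one,
          rsmul_eq (lmax hA) (1 : Matrix (Fin k) (Fin k) ℂ)]
      rw [hcoe2] at h2
      exact eig_le_of_psd hB h2 j
    · refine le_ciInf fun j => ?_
      have h1 : (A - (lmin hA : ℂ) • 1).PosSemidef :=
        psd_sub_smul hA fun i => ciInf_le bddA' i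
      have hcoe : (((⟨A, hA⟩ : Herm n) - lmin hA • 1 : Herm n) : Matrix (Fin n) (Fin n) ℂ)
          = A - (lmin hA : ℂ) • 1 := by
        rw [AddSubgroup.coe_sub, selfAdjoint.val_smul, selfAdjoint.val_one,
          rsmul_eq (lmin hA) (1 : Matrix (Fin n) (Fin n) ℂ)]
      have h2 := hpos ((⟨A, hA⟩ : Herm n) - lmin hA • 1) (by rw [hcoe]; exact h1)
      rw [map_sub, LinearMap.map_smul, hone, hAB] at h2
      have hcoe2 : (((⟨B, hB⟩ : Herm k) - lmin hA • 1 : Herm k) : Matrix (Fin k) (Fin k) ℂ)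
          = B - (lmin hA : ℂ) • 1 := by
        rw [AddSubgroup.coe_sub, selfAdjoint.val_smul, selfAdjoint.val_one,
          rsmul_eq (lmin hA) (1 : Matrix (Fin k) (Fin k) ℂ)]
      rw [hcoe2] at h2
      exact eig_ge_of_psd hB h2 j
  · rintro ⟨h₁, h₂⟩
    obtain ⟨ip, hip⟩ := Finite.exists_max hA.eigenvalues
    obtain ⟨im, him⟩ := Finite.exists_min hA.eigenvalues
    have hMv : hA.eigenvalues ip = lmax hA := le_antisymm (le_ciSup bddA ip) (ciSup_le hip)
    have hmv : hA.eigenvalues im = lmin hA := le_antisymm (le_ciInf him) (ciInf_le bddA' im)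
    set u : Fin n → ℂ := ⇑(hA.eigenvectorBasis ip) with hu
    set v : Fin n → ℂ := ⇑(hA.eigenvectorBasis im) with hv
    have hu1 : phi u (1 : Herm n) = 1 := phi_one (evec_norm hA ip)
    have hv1 : phi v (1 : Herm n) = 1 := phi_one (evec_norm hA im)
    have huA : phi u (⟨A, hA⟩ : Herm n) = lmax hA := by
      rw [phi_apply]
      show (star u ⬝ᵥ A *ᵥ u).re = _
      rw [hu, eig_eq hA ip, Complex.ofReal_re, hMv]
    have hvA : phi v (⟨A, hA⟩ : Herm n) = lmin hA := by
      rw [phi_apply]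
      show (star v ⬝ᵥ A *ᵥ v).re = _
      rw [hv, eig_eq hA im, Complex.ofReal_re, hmv]
    have hBub : ∀ j, hB.eigenvalues j ≤ lmax hA := fun j => (le_ciSup bddB j).trans h₁
    have hBlb : ∀ j, lmin hA ≤ hB.eigenvalues j := fun j => h₂.trans (ciInf_le bddB' j)
    have hmM : lmin hA ≤ lmax hA := (ciInf_le bddA' ip).trans (le_ciSup bddA ip)
    rcases eq_or_lt_of_le hmM with heq | hlt
    · -- degenerate case: A and B are multiples of the identity
      have hBj : ∀ j, hB.eigenvalues j = lmax hA := fun j =>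
        le_antisymm (hBub j) (heq ▸ hBlb j)
      have hBeq : B = (lmax hA : ℂ) • 1 := by
        have hd : diagonal (RCLike.ofReal ∘ hB.eigenvalues)
            = (lmax hA : ℂ) • (1 : Matrix (Fin k) (Fin k) ℂ) := by
          ext a b
          rcases eq_or_ne a b with hab | hab <;>
            simp [Matrix.diagonal_apply, hab, Matrix.one_apply, Matrix.smul_apply, hBj]
        have hsp := hB.spectral_theorem
        rw [hd, Unitary.conjStarAlgAut_apply, mul_smul_comm, mul_one, smul_mul_assoc,
          (Matrix.mem_unitaryGroup_iff).mp hB.eigenvectorUnitary.2] at hsp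
        exact hsp
      refine ⟨(phi u).smulRight 1, ?_, ?_, ?_⟩
      · intro X hX
        show (((phi u X) • (1 : Herm k) : Herm k) : Matrix (Fin k) (Fin k) ℂ).PosSemidef
        rw [selfAdjoint.val_smul, selfAdjoint.val_one]
        exact psd_real_smul Matrix.PosSemidef.one (phi_nonneg u hX)
      · apply Subtype.ext
        show (phi u (1 : Herm n)) • ((1 : Herm k) : Matrix (Fin k) (Fin k) ℂ) = _
        rw [hu1, one_smul, selfAdjoint.val_one]
      · apply Subtype.ext
        show (phi u (⟨A, hA⟩ : Herm n)) • ((1 : Herm k) : Matrix (Fin k) (Fin k) ℂ) = B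
        rw [huA, selfAdjoint.val_one, rsmul_eq, hBeq]
    · -- nondegenerate case
      have hd0 : lmax hA - lmin hA ≠ 0 := sub_ne_zero.mpr hlt.ne'
      have hdpos : (0:ℝ) ≤ (lmax hA - lmin hA)⁻¹ := inv_nonneg.mpr (sub_pos.mpr hlt).le
      refine ⟨(phi u).smulRight ((lmax hA - lmin hA)⁻¹ • ((⟨B, hB⟩ : Herm k) - lmin hA • 1)) +
          (phi v).smulRight ((lmax hA - lmin hA)⁻¹ • (lmax hA • (1 : Herm k) - ⟨B, hB⟩)),
          ?_, ?_, ?_⟩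
      · intro X hX
        have hPv : ((((lmax hA - lmin hA)⁻¹ • ((⟨B, hB⟩ : Herm k) - lmin hA • 1)) : Herm k) :
            Matrix (Fin k) (Fin k) ℂ).PosSemidef := by
          have h0 : (B - (lmin hA : ℂ) • 1).PosSemidef := psd_sub_smul hB hBlb
          have hc : ((((lmax hA - lmin hA)⁻¹ • ((⟨B, hB⟩ : Herm k) - lmin hA • 1)) : Herm k) :
              Matrix (Fin k) (Fin k) ℂ)
              = (lmax hA - lmin hA)⁻¹ • (B - (lmin hA : ℂ) • 1) := by
            rw [selfAdjoint.val_smul, AddSubgroup.coe_sub, selfAdjoint.val_smul,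
              selfAdjoint.val_one, rsmul_eq (lmin hA) (1 : Matrix (Fin k) (Fin k) ℂ)]
          rw [hc]
          exact psd_real_smul h0 hdpos
        have hQv : ((((lmax hA - lmin hA)⁻¹ • (lmax hA • (1 : Herm k) - ⟨B, hB⟩)) : Herm k) :
            Matrix (Fin k) (Fin k) ℂ).PosSemidef := by
          have h0 : ((lmax hA : ℂ) • 1 - B).PosSemidef := psd_smul_sub hB hBub
          have hc : ((((lmax hA - lmin hA)⁻¹ • (lmax hA • (1 : Herm k) - ⟨B, hB⟩)) : Herm k) :
              Matrix (Fin k) (Fin k) ℂ)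
              = (lmax hA - lmin hA)⁻¹ • ((lmax hA : ℂ) • 1 - B) := by
            rw [selfAdjoint.val_smul, AddSubgroup.coe_sub, selfAdjoint.val_smul,
              selfAdjoint.val_one, rsmul_eq (lmax hA) (1 : Matrix (Fin k) (Fin k) ℂ)]
          rw [hc]
          exact psd_real_smul h0 hdpos
        simp only [LinearMap.add_apply, LinearMap.smulRight_apply]
        rw [AddSubgroup.coe_add, selfAdjoint.val_smul, selfAdjoint.val_smul]
        exact (psd_real_smul hPv (phi_nonneg u hX)).add (psd_real_smul hQv (phi_nonneg v hX))
      · have key := comb1 (lmax hA) (lmin hA) (⟨B, hB⟩ : Herm k) 1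
        simp only [LinearMap.add_apply, LinearMap.smulRight_apply]
        rw [hu1, hv1, one_smul, one_smul, key, inv_mul_cancel₀ hd0, one_smul]
      · have key := comb2 (lmax hA) (lmin hA) (⟨B, hB⟩ : Herm k) 1
        simp only [LinearMap.add_apply, LinearMap.smulRight_apply]
        rw [huA, hvA, key, inv_mul_cancel₀ hd0, one_smul]
end

section
/- Let A ∈ H_n and B ∈ H_k be Hermitian with λ_max(A) ≥ λ_max(B) and λ_min(A) ≤ λ_min(B). Then there exists a positive unital linear map Φ: H_n → H_k with Φ(A) = B; concretely, every eigenvalue of B is a convex combination μ_j = Σ_i p_{ij} λ_i of eigenvalues of A, and the map sending each spectral projection P_i of A to Σ_j p_{ij} Q_j (where Q_j are spectral projections of B) and vanishing on the orthogonal complement of span{P_i} is positive, unital, and maps A to B. -/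
open Matrix
open scoped ComplexOrder

/-- Rank-one spectral projection of a Hermitian matrix onto its `i`-th eigenvector. -/
noncomputable def specProj {n : ℕ} {A : Matrix (Fin n) (Fin n) ℂ} (hA : A.IsHermitian)
    (i : Fin n) : Matrix (Fin n) (Fin n) ℂ :=
  Matrix.vecMulVec (fun r => (hA.eigenvectorUnitary : Matrix (Fin n) (Fin n) ℂ) r i)
    (star fun r => (hA.eigenvectorUnitary : Matrix (Fin n) (Fin n) ℂ) r i)

namespace Stmt13Aux

variable {m : ℕ}

lemma trace_vecMulVec_mul (v w : Fin m → ℂ) (X : Matrix (Fin m) (Fin m) ℂ) :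
    (vecMulVec v w * X).trace = w ⬝ᵥ (X *ᵥ v) := by
  simp only [Matrix.trace, Matrix.diag, Matrix.mul_apply, vecMulVec_apply, dotProduct,
    mulVec, Finset.mul_sum]
  rw [Finset.sum_comm]
  exact Finset.sum_congr rfl fun s _ => Finset.sum_congr rfl fun r _ => by ring

lemma vecMulVec_mulVec' (v w x : Fin m → ℂ) :
    vecMulVec v w *ᵥ x = (w ⬝ᵥ x) • v := by
  funext r
  simp only [mulVec, vecMulVec_apply, dotProduct, Pi.smul_apply, smul_eq_mul, Finset.sum_mul]
  exact Finset.sum_congr rfl fun s _ => by ring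

lemma vecMulVec_star_isHermitian (v : Fin m → ℂ) :
    (vecMulVec v (star v)).IsHermitian := by
  funext r s
  simp only [conjTranspose_apply, vecMulVec_apply, Pi.star_apply, star_mul', star_star]
  exact mul_comm _ _

lemma vecMulVec_star_posSemidef (v : Fin m → ℂ) :
    (vecMulVec v (star v)).PosSemidef := by
  refine PosSemidef.of_dotProduct_mulVec_nonneg (vecMulVec_star_isHermitian v) fun x => ?_
  rw [vecMulVec_mulVec', dotProduct_smul]
  have : star x ⬝ᵥ v = star (star v ⬝ᵥ x) := by
    simp only [dotProduct, star_sum, star_mul', Pi.star_apply, star_star]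
    exact Finset.sum_congr rfl fun s _ => by ring
  rw [smul_eq_mul, this]
  exact mul_star_self_nonneg (star v ⬝ᵥ x)

lemma smul_posSemidef {c : ℝ} (hc : 0 ≤ c) {M : Matrix (Fin m) (Fin m) ℂ}
    (hM : M.PosSemidef) : (c • M).PosSemidef := by
  refine PosSemidef.of_dotProduct_mulVec_nonneg ?_ fun x => ?_
  · funext r s
    simp only [conjTranspose_apply, Matrix.smul_apply, star_smul, star_trivial]
    rw [show star (M s r) = Mᴴ r s from rfl, hM.1]
  · have h1 : (c • M) *ᵥ x = c • (M *ᵥ x) := by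
      funext r
      simp only [mulVec, dotProduct, Matrix.smul_apply, Pi.smul_apply, Complex.real_smul,
        Finset.mul_sum]
      exact Finset.sum_congr rfl fun s _ => by ring
    rw [h1, dotProduct_smul]
    have h := hM.dotProduct_mulVec_nonneg x
    rw [Complex.le_def] at h ⊢
    constructor
    · simp only [Complex.zero_re, Complex.real_smul, Complex.mul_re, Complex.ofReal_re,
        Complex.ofReal_im, zero_mul, sub_zero]
      exact mul_nonneg hc h.1
    · simp [Complex.real_smul, Complex.mul_im, ← h.2]

variable {A : Matrix (Fin m) (Fin m) ℂ} (hA : A.IsHermitian)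

/-- Column `i` of the eigenvector unitary. -/
noncomputable def evec (i : Fin m) : Fin m → ℂ :=
  fun r => (hA.eigenvectorUnitary : Matrix (Fin m) (Fin m) ℂ) r i

lemma specProj_eq (i : Fin m) :
    specProj hA i = vecMulVec (evec hA i) (star (evec hA i)) := rfl

lemma star_evec_dot (i j : Fin m) :
    star (evec hA i) ⬝ᵥ evec hA j = if i = j then 1 else 0 := by
  have h : (star (hA.eigenvectorUnitary : Matrix (Fin m) (Fin m) ℂ)) *
      (hA.eigenvectorUnitary : Matrix (Fin m) (Fin m) ℂ) = 1 :=
    (Matrix.mem_unitaryGroup_iff').mp (hA.eigenvectorUnitary).2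
  have h2 := congrFun (congrFun h i) j
  simp only [Matrix.mul_apply, Matrix.star_apply, conjTranspose_apply, Matrix.one_apply] at h2
  rw [← h2]
  simp only [dotProduct, evec, Pi.star_apply]

lemma sum_specProjs : ∑ i, specProj hA i = 1 := by
  simp only [specProj_eq]
  have h : (hA.eigenvectorUnitary : Matrix (Fin m) (Fin m) ℂ) *
      (star (hA.eigenvectorUnitary : Matrix (Fin m) (Fin m) ℂ)) = 1 :=
    (Matrix.mem_unitaryGroup_iff).mp (hA.eigenvectorUnitary).2
  funext r s
  have h2 := congrFun (congrFun h r) s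
  simp only [Matrix.mul_apply, Matrix.star_apply, conjTranspose_apply] at h2
  rw [← h2]
  simp only [Matrix.sum_apply, vecMulVec_apply, evec, Pi.star_apply]

lemma matrix_eq_sum : A = ∑ i, (hA.eigenvalues i : ℂ) • specProj hA i := by
  simp only [specProj_eq]
  conv_lhs => rw [hA.spectral_theorem, Unitary.conjStarAlgAut_apply]
  funext r s
  simp only [Matrix.mul_apply, Matrix.mul_diagonal, Matrix.sum_apply, Pi.smul_apply,
    vecMulVec_apply, smul_eq_mul, Matrix.star_apply, conjTranspose_apply,
    Function.comp, evec, Pi.star_apply, Matrix.diagonal_apply]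
  simp only [mul_ite, mul_zero, Finset.sum_ite_eq', Finset.mem_univ, if_true, Matrix.smul_apply,
    vecMulVec_apply, smul_eq_mul, Pi.star_apply]
  exact Finset.sum_congr rfl fun i _ => by rw [mul_right_comm, mul_comm]; norm_cast

lemma trace_specProj_mul (i : Fin m) (X : Matrix (Fin m) (Fin m) ℂ) :
    (specProj hA i * X).trace = star (evec hA i) ⬝ᵥ (X *ᵥ evec hA i) := by
  rw [specProj_eq, trace_vecMulVec_mul]

lemma trace_specProj_mul_specProj (i i' : Fin m) :
    (specProj hA i * specProj hA i').trace = if i = i' then 1 else 0 := by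
  rw [trace_specProj_mul, specProj_eq, vecMulVec_mulVec', dotProduct_smul, smul_eq_mul,
    star_evec_dot, star_evec_dot]
  by_cases h : i = i'
  · subst h; simp
  · simp [h, Ne.symm h]

lemma trace_specProj_mul_self (i : Fin m) :
    (specProj hA i * A).trace = (hA.eigenvalues i : ℂ) := by
  have key : (specProj hA i * A).trace
      = (specProj hA i * (∑ i', (hA.eigenvalues i' : ℂ) • specProj hA i')).trace := by
    rw [← matrix_eq_sum hA]
  rw [key, Matrix.mul_sum, trace_sum]
  have : ∀ i' : Fin m, (specProj hA i * (hA.eigenvalues i' : ℂ) • specProj hA i').trace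
      = (hA.eigenvalues i' : ℂ) * (if i = i' then 1 else 0) := by
    intro i'
    rw [Matrix.mul_smul, trace_smul, smul_eq_mul, trace_specProj_mul_specProj]
  simp only [this, mul_ite, mul_one, mul_zero, Finset.sum_ite_eq, Finset.mem_univ, if_true]

lemma specProj_isHermitian (i : Fin m) : (specProj hA i).IsHermitian := by
  rw [specProj_eq]; exact vecMulVec_star_isHermitian _

lemma specProj_posSemidef (i : Fin m) : (specProj hA i).PosSemidef := by
  rw [specProj_eq]; exact vecMulVec_star_posSemidef _

end Stmt13Aux

namespace Stmt13Aux

lemma isHermitian_sum {m : ℕ} {ι : Type*} (s : Finset ι) (f : ι → Matrix (Fin m) (Fin m) ℂ)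
    (h : ∀ j ∈ s, (f j).IsHermitian) : (∑ j ∈ s, f j).IsHermitian :=
  Finset.sum_induction f _ (fun _ _ ha hb => ha.add hb) isHermitian_zero h

lemma posSemidef_sum {m : ℕ} {ι : Type*} (s : Finset ι) (f : ι → Matrix (Fin m) (Fin m) ℂ)
    (h : ∀ j ∈ s, (f j).PosSemidef) : (∑ j ∈ s, f j).PosSemidef :=
  Finset.sum_induction f _ (fun _ _ ha hb => ha.add hb) (Matrix.PosSemidef.zero) h

lemma isHermitian_real_smul {m : ℕ} (c : ℝ) {M : Matrix (Fin m) (Fin m) ℂ}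
    (h : M.IsHermitian) : (c • M).IsHermitian := by
  funext r s
  simp only [conjTranspose_apply, Matrix.smul_apply, star_smul, star_trivial]
  rw [show star (M s r) = Mᴴ r s from rfl, h]

lemma real_smul_matrix {m : ℕ} (r : ℝ) (M : Matrix (Fin m) (Fin m) ℂ) :
    r • M = (r : ℂ) • M := by
  funext a b
  simp [Matrix.smul_apply, Complex.real_smul]

end Stmt13Aux

open Stmt13Aux

/-- if `λ_max(A) ≥ λ_max(B)` and `λ_min(A) ≤ λ_min(B)`, then every
eigenvalue of `B` is a convex combination `μ_j = Σ_i p_{ij} λ_i` of eigenvalues of `A`,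
and the map sending each spectral projection `P_i` of `A` to `Σ_j p_{ij} Q_j` and
vanishing on the orthogonal complement of `span{P_i}` is positive, unital, and maps
`A` to `B`. -/
theorem stmt13 (n k : ℕ) (hn : 0 < n) (hk : 0 < k)
    (A : Matrix (Fin n) (Fin n) ℂ) (hA : A.IsHermitian)
    (B : Matrix (Fin k) (Fin k) ℂ) (hB : B.IsHermitian)
    (hmax : lmax hB ≤ lmax hA) (hmin : lmin hA ≤ lmin hB) :
    ∃ p : Fin n → Fin k → ℝ,
      (∀ i j, 0 ≤ p i j) ∧ (∀ j, ∑ i, p i j = 1) ∧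
      (∀ j, hB.eigenvalues j = ∑ i, p i j * hA.eigenvalues i) ∧
      ∃ Φ : Herm n →ₗ[ℝ] Herm k, IsPositiveMap Φ ∧ Φ 1 = 1 ∧
        (∀ (i : Fin n) (X : Herm n), (X : Matrix (Fin n) (Fin n) ℂ) = specProj hA i →
          (Φ X : Matrix (Fin k) (Fin k) ℂ) = ∑ j, p i j • specProj hB j) ∧
        (∀ X : Herm n,
          (∀ i, (specProj hA i * (X : Matrix (Fin n) (Fin n) ℂ)).trace = 0) → Φ X = 0) ∧
        Φ ⟨A, hA⟩ = ⟨B, hB⟩ := by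
  classical
  have hne : Nonempty (Fin n) := ⟨⟨0, hn⟩⟩
  have hkne : Nonempty (Fin k) := ⟨⟨0, hk⟩⟩
  obtain ⟨iM, hiM⟩ := Finite.exists_max hA.eigenvalues
  obtain ⟨im, him⟩ := Finite.exists_min hA.eigenvalues
  have hlmaxA : lmax hA = hA.eigenvalues iM :=
    le_antisymm (ciSup_le hiM) (le_ciSup (Set.Finite.bddAbove (Set.finite_range _)) iM)
  have hlminA : lmin hA = hA.eigenvalues im :=
    le_antisymm (ciInf_le (Set.Finite.bddBelow (Set.finite_range _)) im) (le_ciInf him)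
  have hμle : ∀ j, hB.eigenvalues j ≤ hA.eigenvalues iM := fun j =>
    ((le_ciSup (Set.Finite.bddAbove (Set.finite_range _)) j).trans hmax).trans hlmaxA.le
  have hμge : ∀ j, hA.eigenvalues im ≤ hB.eigenvalues j := fun j =>
    (hlminA.ge.trans hmin).trans (ciInf_le (Set.Finite.bddBelow (Set.finite_range _)) j)
  set t : Fin k → ℝ := fun j =>
    if hA.eigenvalues iM = hA.eigenvalues im then 1
    else (hB.eigenvalues j - hA.eigenvalues im) / (hA.eigenvalues iM - hA.eigenvalues im)
    with ht
  have ht0 : ∀ j, 0 ≤ t j := by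
    intro j
    by_cases h : hA.eigenvalues iM = hA.eigenvalues im
    · simp [ht, h]
    · have hd : 0 < hA.eigenvalues iM - hA.eigenvalues im :=
        sub_pos.mpr (lt_of_le_of_ne (him iM) (Ne.symm h))
      simp only [ht, h, if_false]
      exact div_nonneg (sub_nonneg.mpr (hμge j)) hd.le
  have ht1 : ∀ j, t j ≤ 1 := by
    intro j
    by_cases h : hA.eigenvalues iM = hA.eigenvalues im
    · simp [ht, h]
    · have hd : 0 < hA.eigenvalues iM - hA.eigenvalues im :=
        sub_pos.mpr (lt_of_le_of_ne (him iM) (Ne.symm h))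
      simp only [ht, h, if_false]
      rw [div_le_one hd]
      exact sub_le_sub_right (hμle j) _
  have htconv : ∀ j, t j * hA.eigenvalues iM + (1 - t j) * hA.eigenvalues im
      = hB.eigenvalues j := by
    intro j
    by_cases h : hA.eigenvalues iM = hA.eigenvalues im
    · have h1 : hB.eigenvalues j = hA.eigenvalues iM :=
        le_antisymm (hμle j) (h ▸ hμge j)
      simp only [ht, h, if_true, h1, one_mul, sub_self, zero_mul, add_zero, h]
    · have hd : hA.eigenvalues iM - hA.eigenvalues im ≠ 0 := sub_ne_zero.mpr h
      simp only [ht, h, if_false]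
      field_simp
      ring
  set p : Fin n → Fin k → ℝ := fun i j =>
    (if i = iM then t j else 0) + (if i = im then 1 - t j else 0) with hp
  have hpnn : ∀ i j, 0 ≤ p i j := by
    intro i j
    apply add_nonneg
    · split
      · exact ht0 j
      · exact le_refl 0
    · split
      · exact sub_nonneg.mpr (ht1 j)
      · exact le_refl 0
  have hpcol : ∀ j, ∑ i, p i j = 1 := by
    intro j
    simp only [hp, Finset.sum_add_distrib, Finset.sum_ite_eq', Finset.mem_univ, if_true]
    ring
  have hμeq : ∀ j, hB.eigenvalues j = ∑ i, p i j * hA.eigenvalues i := by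
    intro j
    simp only [hp, add_mul, Finset.sum_add_distrib, ite_mul, zero_mul,
      Finset.sum_ite_eq', Finset.mem_univ, if_true]
    exact (htconv j).symm
  refine ⟨p, hpnn, hpcol, hμeq, ?_⟩
  -- the map
  set c : Fin n → Herm n → ℝ :=
    fun i X => ((specProj hA i * (X : Matrix (Fin n) (Fin n) ℂ)).trace).re with hc
  set Φmat : Herm n → Matrix (Fin k) (Fin k) ℂ :=
    fun X => ∑ j, (∑ i, p i j * c i X) • specProj hB j with hΦmat
  have hmem : ∀ X, Φmat X ∈ selfAdjoint (Matrix (Fin k) (Fin k) ℂ) := by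
    intro X
    exact isHermitian_sum _ _ fun j _ => isHermitian_real_smul _ (specProj_isHermitian hB j)
  have hcadd : ∀ i (X Y : Herm n), c i (X + Y) = c i X + c i Y := by
    intro i X Y
    simp only [hc, AddSubgroup.coe_add, Matrix.mul_add, trace_add, Complex.add_re]
  have hcsmul : ∀ i (r : ℝ) (X : Herm n), c i (r • X) = r * c i X := by
    intro i r X
    have hcoe : ((r • X : Herm n) : Matrix (Fin n) (Fin n) ℂ)
        = r • (X : Matrix (Fin n) (Fin n) ℂ) := rfl
    simp only [hc, hcoe, Matrix.mul_smul, trace_smul]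
    rw [Complex.real_smul, Complex.mul_re]
    simp
  refine ⟨{ toFun := fun X => ⟨Φmat X, hmem X⟩,
            map_add' := ?_, map_smul' := ?_ }, ?_, ?_, ?_, ?_, ?_⟩
  · intro X Y
    apply Subtype.ext
    show Φmat (X + Y) = Φmat X + Φmat Y
    simp only [hΦmat, hcadd, mul_add]
    rw [← Finset.sum_add_distrib]
    refine Finset.sum_congr rfl fun j _ => ?_
    rw [Finset.sum_add_distrib, add_smul]
  · intro r X
    apply Subtype.ext
    show Φmat (r • X) = r • Φmat X
    simp only [hΦmat, hcsmul]
    rw [Finset.smul_sum]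
    refine Finset.sum_congr rfl fun j _ => ?_
    rw [smul_smul]
    congr 1
    rw [Finset.mul_sum]
    exact Finset.sum_congr rfl fun i _ => by ring
  · -- positive
    intro X hX
    show (Φmat X).PosSemidef
    refine posSemidef_sum _ _ fun j _ => ?_
    refine smul_posSemidef ?_ (specProj_posSemidef hB j)
    refine Finset.sum_nonneg fun i _ => mul_nonneg (hpnn i j) ?_
    have h2 := hX.dotProduct_mulVec_nonneg (evec hA i)
    rw [Complex.le_def] at h2
    have : c i X = ((specProj hA i * (X : Matrix (Fin n) (Fin n) ℂ)).trace).re := rfl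
    rw [this, trace_specProj_mul hA i]
    simpa using h2.1
  · -- unital
    apply Subtype.ext
    show Φmat 1 = 1
    have hc1 : ∀ i, c i 1 = 1 := by
      intro i
      have hcoe : ((1 : Herm n) : Matrix (Fin n) (Fin n) ℂ) = 1 := rfl
      have : c i 1 = ((specProj hA i * (1 : Matrix (Fin n) (Fin n) ℂ)).trace).re := rfl
      rw [this, mul_one, ← mul_one (specProj hA i), trace_specProj_mul hA i, one_mulVec,
        star_evec_dot]
      simp
    simp only [hΦmat, hc1, mul_one, hpcol, one_smul]
    exact sum_specProjs hB
  · -- specProj image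
    intro i X hXeq
    show Φmat X = ∑ j, p i j • specProj hB j
    have hci : ∀ i', c i' X = if i' = i then 1 else 0 := by
      intro i'
      have : c i' X = ((specProj hA i' * specProj hA i).trace).re := by
        simp only [hc]; rw [hXeq]
      rw [this, trace_specProj_mul_specProj hA]
      rw [apply_ite Complex.re]
      simp
    simp only [hΦmat, hci, mul_ite, mul_one, mul_zero, Finset.sum_ite_eq',
      Finset.mem_univ, if_true]
  · -- vanishing
    intro X hX
    apply Subtype.ext
    show Φmat X = 0
    have hci : ∀ i, c i X = 0 := fun i => by simp only [hc]; rw [hX i]; simp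
    simp only [hΦmat, hci, mul_zero, Finset.sum_const_zero, zero_smul,
      Finset.sum_const_zero]
  · -- maps A to B
    apply Subtype.ext
    show Φmat ⟨A, hA⟩ = B
    have hci : ∀ i, c i ⟨A, hA⟩ = hA.eigenvalues i := by
      intro i
      have : c i ⟨A, hA⟩ = ((specProj hA i * A).trace).re := rfl
      rw [this, trace_specProj_mul_self hA]
      simp
    have : Φmat ⟨A, hA⟩ = ∑ j, (hB.eigenvalues j : ℂ) • specProj hB j := by
      simp only [hΦmat, hci]
      refine Finset.sum_congr rfl fun j _ => ?_
      rw [← hμeq j, real_smul_matrix]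
    rw [this, ← matrix_eq_sum hB]
end

section
/- Let A ∈ H_n and B ∈ H_k be Hermitian matrices, each neither positive nor negative semidefinite. Then there exists a positive unital linear map Φ: H_n → H_k with Φ(A) = B if and only if ‖A₊‖_∞ ≥ ‖B₊‖_∞ and ‖A₋‖_∞ ≥ ‖B₋‖_∞. -/
open Matrix
open scoped ComplexOrder

section Aux
variable {m : ℕ} {M : Matrix (Fin m) (Fin m) ℂ}

lemma aux_quad (hM : M.IsHermitian) (x : Fin m → ℂ) :
    ∃ c : Fin m → ℝ, (∀ i, 0 ≤ c i) ∧
      star x ⬝ᵥ (M *ᵥ x) = ((∑ i, hM.eigenvalues i * c i : ℝ) : ℂ) ∧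
      star x ⬝ᵥ x = ((∑ i, c i : ℝ) : ℂ) := by
  set U : Matrix (Fin m) (Fin m) ℂ := (hM.eigenvectorUnitary : Matrix (Fin m) (Fin m) ℂ) with hU
  set y := star U *ᵥ x with hy
  refine ⟨fun i => Complex.normSq (y i), fun i => Complex.normSq_nonneg _, ?_, ?_⟩
  · have hAx : M *ᵥ x = U *ᵥ ((diagonal (RCLike.ofReal ∘ hM.eigenvalues)) *ᵥ y) := by
      conv_lhs => rw [hM.spectral_theorem]
      simp [mulVec_mulVec, hy, hU, Matrix.mul_assoc]
    have hrow : star x ᵥ* U = star y := by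
      rw [hy, star_mulVec, star_eq_conjTranspose, conjTranspose_conjTranspose]
    rw [hAx, dotProduct_mulVec, hrow]
    push_cast
    simp only [dotProduct, mulVec_diagonal, Function.comp, Pi.star_apply]
    refine Finset.sum_congr rfl fun i _ => ?_
    rw [Complex.normSq_eq_conj_mul_self]
    simp only [Complex.star_def]
    rw [mul_left_comm]
    norm_cast
  · have hrow : star x ᵥ* U = star y := by
      rw [hy, star_mulVec, star_eq_conjTranspose, conjTranspose_conjTranspose]
    have hx : star y ⬝ᵥ y = star x ⬝ᵥ x := by
      rw [← hrow, ← dotProduct_mulVec, hy, mulVec_mulVec,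
        (Matrix.mem_unitaryGroup_iff).mp hM.eigenvectorUnitary.2, one_mulVec]
    rw [← hx]
    push_cast
    simp only [dotProduct, Pi.star_apply]
    refine Finset.sum_congr rfl fun i _ => ?_
    rw [Complex.normSq_eq_conj_mul_self]
    simp [Complex.star_def]

lemma aux_quad_real (hM : M.IsHermitian) (x : Fin m → ℂ) :
    star x ⬝ᵥ (M *ᵥ x) = (((star x ⬝ᵥ (M *ᵥ x)).re : ℝ) : ℂ) := by
  obtain ⟨c, -, h, -⟩ := aux_quad hM x
  rw [h]; simp

lemma aux_norm_re_nonneg (x : Fin m → ℂ) : 0 ≤ (star x ⬝ᵥ x).re := by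
  simp only [dotProduct, Pi.star_apply, Complex.re_sum]
  refine Finset.sum_nonneg fun i _ => ?_
  rw [Complex.star_def, ← Complex.normSq_eq_conj_mul_self]
  simpa using Complex.normSq_nonneg _

lemma aux_psd_iff (hM : M.IsHermitian) :
    M.PosSemidef ↔ ∀ x : Fin m → ℂ, 0 ≤ (star x ⬝ᵥ (M *ᵥ x)).re := by
  constructor
  · intro h x
    have := h.dotProduct_mulVec_nonneg x
    rw [Complex.le_def] at this
    simpa using this.1
  · intro h
    refine Matrix.PosSemidef.of_dotProduct_mulVec_nonneg hM fun x => ?_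
    rw [aux_quad_real hM x]
    exact Complex.zero_le_real.2 (h x)

lemma aux_quad_re_le (hM : M.IsHermitian) (x : Fin m → ℂ) :
    (star x ⬝ᵥ (M *ᵥ x)).re ≤ lmax hM * (star x ⬝ᵥ x).re := by
  obtain ⟨c, hc, h1, h2⟩ := aux_quad hM x
  rw [h1, h2]
  simp only [Complex.ofReal_re]
  rw [Finset.mul_sum]
  refine Finset.sum_le_sum fun i _ => ?_
  exact mul_le_mul_of_nonneg_right
    (le_ciSup (Set.Finite.bddAbove (Set.finite_range _)) i) (hc i)

lemma aux_quad_re_ge (hM : M.IsHermitian) (x : Fin m → ℂ) :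
    lmin hM * (star x ⬝ᵥ x).re ≤ (star x ⬝ᵥ (M *ᵥ x)).re := by
  obtain ⟨c, hc, h1, h2⟩ := aux_quad hM x
  rw [h1, h2]
  simp only [Complex.ofReal_re]
  rw [Finset.mul_sum]
  refine Finset.sum_le_sum fun i _ => ?_
  exact mul_le_mul_of_nonneg_right
    (ciInf_le (Set.Finite.bddBelow (Set.finite_range _)) i) (hc i)

lemma aux_eig_quad (hM : M.IsHermitian) (i : Fin m) :
    star ⇑(hM.eigenvectorBasis i) ⬝ᵥ (M *ᵥ ⇑(hM.eigenvectorBasis i)) = (hM.eigenvalues i : ℂ) ∧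
    star ⇑(hM.eigenvectorBasis i) ⬝ᵥ ⇑(hM.eigenvectorBasis i) = 1 := by
  have hunit : star ⇑(hM.eigenvectorBasis i) ⬝ᵥ ⇑(hM.eigenvectorBasis i) = 1 := by
    have h0 := hM.eigenvectorBasis.orthonormal.1 i
    have h1 : (inner ℂ (hM.eigenvectorBasis i) (hM.eigenvectorBasis i) : ℂ) = 1 := by
      rw [inner_self_eq_norm_sq_to_K, h0]; simp
    rw [EuclideanSpace.inner_eq_star_dotProduct] at h1
    rwa [dotProduct_comm] at h1
  refine ⟨?_, hunit⟩
  rw [hM.mulVec_eigenvectorBasis, dotProduct_smul, hunit]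
  simp [Complex.real_smul]
end Aux

section Aux2
variable {m : ℕ} {M : Matrix (Fin m) (Fin m) ℂ}


lemma aux_pos_dim (hM1 : ¬ M.PosSemidef) (hM : M.IsHermitian) : 0 < m := by
  by_contra h
  push_neg at h
  interval_cases m
  exact hM1 (Matrix.PosSemidef.of_dotProduct_mulVec_nonneg hM fun x => by simp [dotProduct])

lemma aux_exists_max (hm : 0 < m) (hM : M.IsHermitian) :
    ∃ i, hM.eigenvalues i = lmax hM := by
  have : Nonempty (Fin m) := ⟨⟨0, hm⟩⟩
  obtain ⟨i, hi⟩ := Finite.exists_max hM.eigenvalues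
  exact ⟨i, le_antisymm (le_ciSup (Set.Finite.bddAbove (Set.finite_range _)) i)
    (ciSup_le hi)⟩

lemma aux_exists_min (hm : 0 < m) (hM : M.IsHermitian) :
    ∃ i, hM.eigenvalues i = lmin hM := by
  have : Nonempty (Fin m) := ⟨⟨0, hm⟩⟩
  obtain ⟨i, hi⟩ := Finite.exists_min hM.eigenvalues
  exact ⟨i, le_antisymm (le_ciInf hi) (ciInf_le (Set.Finite.bddBelow (Set.finite_range _)) i)⟩

lemma aux_lmax_pos (hM : M.IsHermitian) (hM2 : ¬ (-M).PosSemidef) : 0 < lmax hM := by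
  by_contra h
  push_neg at h
  refine hM2 ((aux_psd_iff hM.neg).2 fun x => ?_)
  have h1 : star x ⬝ᵥ ((-M) *ᵥ x) = -(star x ⬝ᵥ (M *ᵥ x)) := by
    rw [neg_mulVec, dotProduct_neg]
  rw [h1, Complex.neg_re, neg_nonneg]
  calc (star x ⬝ᵥ (M *ᵥ x)).re ≤ lmax hM * (star x ⬝ᵥ x).re := aux_quad_re_le hM x
    _ ≤ 0 := mul_nonpos_of_nonpos_of_nonneg h (aux_norm_re_nonneg x)

lemma aux_lmin_neg (hM : M.IsHermitian) (hM1 : ¬ M.PosSemidef) : lmin hM < 0 := by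
  by_contra h
  push_neg at h
  refine hM1 ((aux_psd_iff hM).2 fun x => ?_)
  calc (0:ℝ) = 0 * (star x ⬝ᵥ x).re := by ring
    _ ≤ lmin hM * (star x ⬝ᵥ x).re :=
        mul_le_mul_of_nonneg_right h (aux_norm_re_nonneg x)
    _ ≤ _ := aux_quad_re_ge hM x

lemma jordan_opN {Mp Mn : Matrix (Fin m) (Fin m) ℂ} (hM : M.IsHermitian)
    (hM1 : ¬ M.PosSemidef) (hM2 : ¬ (-M).PosSemidef)
    (hMp : Mp.PosSemidef) (hMn : Mn.PosSemidef) (hJ : M = Mp - Mn) (hO : Mp * Mn = 0) :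
    opN hMp.1 = lmax hM ∧ opN hMn.1 = -lmin hM := by
  have hm : 0 < m := aux_pos_dim hM1 hM
  have : Nonempty (Fin m) := ⟨⟨0, hm⟩⟩
  have hmaxpos : 0 < lmax hM := aux_lmax_pos hM hM2
  have hminneg : lmin hM < 0 := aux_lmin_neg hM hM1
  have hO' : Mn * Mp = 0 := by
    have := congrArg conjTranspose hO
    rwa [conjTranspose_mul, hMp.1, hMn.1, conjTranspose_zero] at this
  constructor
  · -- opN hMp.1 = lmax hM
    refine le_antisymm (ciSup_le fun i => ?_) ?_
    · -- each |eigenvalue of Mp| ≤ lmax hM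
      rw [abs_of_nonneg (hMp.eigenvalues_nonneg i)]
      rcases eq_or_lt_of_le (hMp.eigenvalues_nonneg i) with h0 | hpos
      · rw [← h0]; exact le_of_lt hmaxpos
      · set v := ⇑(hMp.1.eigenvectorBasis i) with hv
        have hev : Mp *ᵥ v = hMp.1.eigenvalues i • v := hMp.1.mulVec_eigenvectorBasis i
        have hnv : Mn *ᵥ v = 0 := by
          have h1 : Mn *ᵥ (Mp *ᵥ v) = 0 := by
            rw [mulVec_mulVec, hO', zero_mulVec]
          rw [hev, mulVec_smul] at h1
          have h2 : hMp.1.eigenvalues i • (Mn *ᵥ v) = hMp.1.eigenvalues i • (0 : Fin m → ℂ) := by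
            rw [h1, smul_zero]
          exact smul_right_injective _ (ne_of_gt hpos) h2
        have hMv : M *ᵥ v = hMp.1.eigenvalues i • v := by
          rw [hJ, sub_mulVec, hnv, hev, sub_zero]
        have hq : star v ⬝ᵥ (M *ᵥ v) = (hMp.1.eigenvalues i : ℂ) := by
          rw [hMv, dotProduct_smul, (aux_eig_quad hMp.1 i).2]
          simp [Complex.real_smul]
        have := aux_quad_re_le hM v
        rw [hq] at this
        simpa [hv, (aux_eig_quad hMp.1 i).2] using this
    · -- lmax hM ≤ opN hMp.1
      obtain ⟨i0, hi0⟩ := aux_exists_max hm hM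
      set u := ⇑(hM.eigenvectorBasis i0) with hu
      have hq : star u ⬝ᵥ (M *ᵥ u) = (lmax hM : ℂ) := by
        rw [(aux_eig_quad hM i0).1, hi0]
      have hsplit : star u ⬝ᵥ (M *ᵥ u)
          = star u ⬝ᵥ (Mp *ᵥ u) - star u ⬝ᵥ (Mn *ᵥ u) := by
        rw [hJ, sub_mulVec, dotProduct_sub]
      have hnn : 0 ≤ (star u ⬝ᵥ (Mn *ᵥ u)).re := (aux_psd_iff hMn.1).1 hMn u
      have h2 : lmax hM ≤ (star u ⬝ᵥ (Mp *ᵥ u)).re := by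
        have := congrArg Complex.re hsplit
        rw [hq, Complex.ofReal_re, Complex.sub_re] at this
        linarith
      calc lmax hM ≤ (star u ⬝ᵥ (Mp *ᵥ u)).re := h2
        _ ≤ lmax hMp.1 * (star u ⬝ᵥ u).re := aux_quad_re_le hMp.1 u
        _ = lmax hMp.1 := by rw [(aux_eig_quad hM i0).2]; simp
        _ ≤ opN hMp.1 := ciSup_mono (Set.Finite.bddAbove (Set.finite_range _))
            fun i => le_abs_self _
  · -- opN hMn.1 = -lmin hM
    refine le_antisymm (ciSup_le fun i => ?_) ?_
    · rw [abs_of_nonneg (hMn.eigenvalues_nonneg i)]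
      rcases eq_or_lt_of_le (hMn.eigenvalues_nonneg i) with h0 | hpos
      · rw [← h0]; linarith
      · set v := ⇑(hMn.1.eigenvectorBasis i) with hv
        have hev : Mn *ᵥ v = hMn.1.eigenvalues i • v := hMn.1.mulVec_eigenvectorBasis i
        have hnv : Mp *ᵥ v = 0 := by
          have h1 : Mp *ᵥ (Mn *ᵥ v) = 0 := by
            rw [mulVec_mulVec, hO, zero_mulVec]
          rw [hev, mulVec_smul] at h1
          have h2 : hMn.1.eigenvalues i • (Mp *ᵥ v) = hMn.1.eigenvalues i • (0 : Fin m → ℂ) := by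
            rw [h1, smul_zero]
          exact smul_right_injective _ (ne_of_gt hpos) h2
        have hMv : M *ᵥ v = -(hMn.1.eigenvalues i • v) := by
          rw [hJ, sub_mulVec, hnv, hev, zero_sub]
        have hq : star v ⬝ᵥ (M *ᵥ v) = -(hMn.1.eigenvalues i : ℂ) := by
          rw [hMv, dotProduct_neg, dotProduct_smul, (aux_eig_quad hMn.1 i).2]
          simp [Complex.real_smul]
        have := aux_quad_re_ge hM v
        rw [hq] at this
        have h3 : (star v ⬝ᵥ v).re = 1 := by rw [(aux_eig_quad hMn.1 i).2]; simp
        rw [h3, mul_one] at this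
        simp only [Complex.neg_re, Complex.ofReal_re] at this
        linarith
    · obtain ⟨i0, hi0⟩ := aux_exists_min hm hM
      set u := ⇑(hM.eigenvectorBasis i0) with hu
      have hq : star u ⬝ᵥ (M *ᵥ u) = (lmin hM : ℂ) := by
        rw [(aux_eig_quad hM i0).1, hi0]
      have hsplit : star u ⬝ᵥ (M *ᵥ u)
          = star u ⬝ᵥ (Mp *ᵥ u) - star u ⬝ᵥ (Mn *ᵥ u) := by
        rw [hJ, sub_mulVec, dotProduct_sub]
      have hnn : 0 ≤ (star u ⬝ᵥ (Mp *ᵥ u)).re := (aux_psd_iff hMp.1).1 hMp u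
      have h2 : -lmin hM ≤ (star u ⬝ᵥ (Mn *ᵥ u)).re := by
        have := congrArg Complex.re hsplit
        rw [hq, Complex.ofReal_re, Complex.sub_re] at this
        linarith
      calc -lmin hM ≤ (star u ⬝ᵥ (Mn *ᵥ u)).re := h2
        _ ≤ lmax hMn.1 * (star u ⬝ᵥ u).re := aux_quad_re_le hMn.1 u
        _ = lmax hMn.1 := by rw [(aux_eig_quad hM i0).2]; simp
        _ ≤ opN hMn.1 := ciSup_mono (Set.Finite.bddAbove (Set.finite_range _))
            fun i => le_abs_self _
end Aux2

section Aux3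
variable {m : ℕ} {M : Matrix (Fin m) (Fin m) ℂ}

lemma aux_quad_smul (r : ℝ) (M : Matrix (Fin m) (Fin m) ℂ) (x : Fin m → ℂ) :
    (star x ⬝ᵥ ((r • M) *ᵥ x)).re = r * (star x ⬝ᵥ (M *ᵥ x)).re := by
  rw [smul_mulVec, dotProduct_smul, Complex.smul_re]; rfl

lemma aux_quad_add (M N : Matrix (Fin m) (Fin m) ℂ) (x : Fin m → ℂ) :
    (star x ⬝ᵥ ((M + N) *ᵥ x)).re
      = (star x ⬝ᵥ (M *ᵥ x)).re + (star x ⬝ᵥ (N *ᵥ x)).re := by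
  rw [add_mulVec, dotProduct_add, Complex.add_re]

lemma aux_quad_sub (M N : Matrix (Fin m) (Fin m) ℂ) (x : Fin m → ℂ) :
    (star x ⬝ᵥ ((M - N) *ᵥ x)).re
      = (star x ⬝ᵥ (M *ᵥ x)).re - (star x ⬝ᵥ (N *ᵥ x)).re := by
  rw [sub_mulVec, dotProduct_sub, Complex.sub_re]

lemma aux_quad_one (x : Fin m → ℂ) :
    (star x ⬝ᵥ ((1 : Matrix (Fin m) (Fin m) ℂ) *ᵥ x)).re = (star x ⬝ᵥ x).re := by
  rw [one_mulVec]

lemma aux_psd_smul_one_sub (hM : M.IsHermitian) {t : ℝ} (h : lmax hM ≤ t)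
    (hsa : (t • (1 : Matrix (Fin m) (Fin m) ℂ) - M).IsHermitian) :
    (t • (1 : Matrix (Fin m) (Fin m) ℂ) - M).PosSemidef := by
  refine (aux_psd_iff hsa).2 fun x => ?_
  rw [aux_quad_sub, aux_quad_smul, aux_quad_one]
  have h1 := aux_quad_re_le hM x
  have h2 := aux_norm_re_nonneg x
  nlinarith

lemma aux_psd_add_smul_one (hM : M.IsHermitian) {t : ℝ} (h : -t ≤ lmin hM)
    (hsa : (M + t • (1 : Matrix (Fin m) (Fin m) ℂ)).IsHermitian) :
    (M + t • (1 : Matrix (Fin m) (Fin m) ℂ)).PosSemidef := by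
  refine (aux_psd_iff hsa).2 fun x => ?_
  rw [aux_quad_add, aux_quad_smul, aux_quad_one]
  have h1 := aux_quad_re_ge hM x
  have h2 := aux_norm_re_nonneg x
  nlinarith

lemma aux_lmax_le_of_psd (hm : 0 < m) (hM : M.IsHermitian) {t : ℝ}
    (h : (t • (1 : Matrix (Fin m) (Fin m) ℂ) - M).PosSemidef) : lmax hM ≤ t := by
  have : Nonempty (Fin m) := ⟨⟨0, hm⟩⟩
  refine ciSup_le fun i => ?_
  have := (aux_psd_iff h.1).1 h ⇑(hM.eigenvectorBasis i)
  rw [aux_quad_sub, aux_quad_smul, aux_quad_one, (aux_eig_quad hM i).1] at this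
  have h2 : (star ⇑(hM.eigenvectorBasis i) ⬝ᵥ ⇑(hM.eigenvectorBasis i)).re = 1 := by
    rw [(aux_eig_quad hM i).2]; simp
  rw [h2] at this
  simp only [Complex.ofReal_re] at this
  linarith

lemma aux_lmin_ge_of_psd (hm : 0 < m) (hM : M.IsHermitian) {t : ℝ}
    (h : (M + t • (1 : Matrix (Fin m) (Fin m) ℂ)).PosSemidef) : -t ≤ lmin hM := by
  have : Nonempty (Fin m) := ⟨⟨0, hm⟩⟩
  refine le_ciInf fun i => ?_
  have := (aux_psd_iff h.1).1 h ⇑(hM.eigenvectorBasis i)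
  rw [aux_quad_add, aux_quad_smul, aux_quad_one, (aux_eig_quad hM i).1] at this
  have h2 : (star ⇑(hM.eigenvectorBasis i) ⬝ᵥ ⇑(hM.eigenvectorBasis i)).re = 1 := by
    rw [(aux_eig_quad hM i).2]; simp
  rw [h2] at this
  simp only [Complex.ofReal_re] at this
  linarith
end Aux3

/-- for indefinite Hermitian `A`, `B`, a positive unital map sending
`A` to `B` exists iff `‖A₊‖_∞ ≥ ‖B₊‖_∞` and `‖A₋‖_∞ ≥ ‖B₋‖_∞`. -/
theorem stmt14 (n k : ℕ)
    (A Ap An : Matrix (Fin n) (Fin n) ℂ) (hA : A.IsHermitian)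
    (hA1 : ¬ A.PosSemidef) (hA2 : ¬ (-A).PosSemidef)
    (hAp : Ap.PosSemidef) (hAn : An.PosSemidef) (hJA : A = Ap - An) (hOA : Ap * An = 0)
    (B Bp Bn : Matrix (Fin k) (Fin k) ℂ) (hB : B.IsHermitian)
    (hB1 : ¬ B.PosSemidef) (hB2 : ¬ (-B).PosSemidef)
    (hBp : Bp.PosSemidef) (hBn : Bn.PosSemidef) (hJB : B = Bp - Bn) (hOB : Bp * Bn = 0) :
    (∃ Φ : Herm n →ₗ[ℝ] Herm k, IsPositiveMap Φ ∧ Φ 1 = 1 ∧ Φ ⟨A, hA⟩ = ⟨B, hB⟩) ↔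
      opN hBp.1 ≤ opN hAp.1 ∧ opN hBn.1 ≤ opN hAn.1 := by
  have hn : 0 < n := aux_pos_dim hA1 hA
  have hk : 0 < k := aux_pos_dim hB1 hB
  obtain ⟨hJA1, hJA2⟩ := jordan_opN hA hA1 hA2 hAp hAn hJA hOA
  obtain ⟨hJB1, hJB2⟩ := jordan_opN hB hB1 hB2 hBp hBn hJB hOB
  rw [hJA1, hJA2, hJB1, hJB2]
  have hapos : 0 < lmax hA := aux_lmax_pos hA hA2
  have hcpos : lmin hA < 0 := aux_lmin_neg hA hA1
  have hbpos : 0 < lmax hB := aux_lmax_pos hB hB2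
  have hdpos : lmin hB < 0 := aux_lmin_neg hB hB1
  constructor
  · rintro ⟨Φ, hpos, hone, hAB⟩
    have key : ∀ t : ℝ, ∀ X : Herm n, ((X : Matrix (Fin n) (Fin n) ℂ)).PosSemidef →
        ((Φ X : Matrix (Fin k) (Fin k) ℂ)).PosSemidef := fun _ => hpos
    constructor
    · -- lmax hB ≤ lmax hA
      set t := lmax hA with ht
      have hXval : (((t • 1 - ⟨A, hA⟩ : Herm n)) : Matrix (Fin n) (Fin n) ℂ)
          = t • (1 : Matrix (Fin n) (Fin n) ℂ) - A := by
        simp [selfAdjoint.val_smul]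
      have hXpsd : (((t • 1 - ⟨A, hA⟩ : Herm n)) : Matrix (Fin n) (Fin n) ℂ).PosSemidef := by
        rw [hXval]
        exact aux_psd_smul_one_sub hA (le_refl t) (hXval ▸ (t • 1 - (⟨A, hA⟩ : Herm n)).2)
      have hY := hpos _ hXpsd
      have hφ : Φ (t • 1 - ⟨A, hA⟩) = t • 1 - ⟨B, hB⟩ := by
        rw [map_sub, _root_.map_smul, hone, hAB]
      rw [hφ] at hY
      have hYval : (((t • 1 - ⟨B, hB⟩ : Herm k)) : Matrix (Fin k) (Fin k) ℂ)
          = t • (1 : Matrix (Fin k) (Fin k) ℂ) - B := by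
        simp [selfAdjoint.val_smul]
      rw [hYval] at hY
      exact aux_lmax_le_of_psd hk hB hY
    · -- -lmin hB ≤ -lmin hA
      set t := -lmin hA with ht
      have hXval : (((⟨A, hA⟩ + t • 1 : Herm n)) : Matrix (Fin n) (Fin n) ℂ)
          = A + t • (1 : Matrix (Fin n) (Fin n) ℂ) := by
        simp [selfAdjoint.val_smul]
      have hXpsd : (((⟨A, hA⟩ + t • 1 : Herm n)) : Matrix (Fin n) (Fin n) ℂ).PosSemidef := by
        rw [hXval]
        exact aux_psd_add_smul_one hA (by simp [ht]) (hXval ▸ ((⟨A, hA⟩ : Herm n) + t • 1).2)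
      have hY := hpos _ hXpsd
      have hφ : Φ (⟨A, hA⟩ + t • 1) = ⟨B, hB⟩ + t • 1 := by
        rw [map_add, _root_.map_smul, hone, hAB]
      rw [hφ] at hY
      have hYval : (((⟨B, hB⟩ + t • 1 : Herm k)) : Matrix (Fin k) (Fin k) ℂ)
          = B + t • (1 : Matrix (Fin k) (Fin k) ℂ) := by
        simp [selfAdjoint.val_smul]
      rw [hYval] at hY
      have := aux_lmin_ge_of_psd hk hB hY
      linarith
  · rintro ⟨h1, h2⟩
    set a := lmax hA with ha'
    have hlminA : lmin hA = -(-lmin hA) := by ring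
    set c := -lmin hA with hc'
    have hcpos' : 0 < c := by simp [hc']; linarith
    have hac : (0:ℝ) < a + c := by linarith
    have hacne : a + c ≠ 0 := ne_of_gt hac
    obtain ⟨ia, hia⟩ := aux_exists_max hn hA
    obtain ⟨ic, hic⟩ := aux_exists_min hn hA
    set u : Fin n → ℂ := ⇑(hA.eigenvectorBasis ia) with hu
    set w : Fin n → ℂ := ⇑(hA.eigenvectorBasis ic) with hw
    set Mh : Herm k := (a + c)⁻¹ • ((⟨B, hB⟩ : Herm k) + c • 1) with hMh
    set Nh : Herm k := (a + c)⁻¹ • (a • 1 - (⟨B, hB⟩ : Herm k)) with hNh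
    have hMco : (Mh : Matrix (Fin k) (Fin k) ℂ)
        = (a + c)⁻¹ • (B + c • (1 : Matrix (Fin k) (Fin k) ℂ)) := by
      simp [hMh, selfAdjoint.val_smul]
    have hNco : (Nh : Matrix (Fin k) (Fin k) ℂ)
        = (a + c)⁻¹ • (a • (1 : Matrix (Fin k) (Fin k) ℂ) - B) := by
      simp [hNh, selfAdjoint.val_smul]
    have hMpsd : (Mh : Matrix (Fin k) (Fin k) ℂ).PosSemidef := by
      refine (aux_psd_iff Mh.2).2 fun x => ?_
      rw [hMco, aux_quad_smul, aux_quad_add, aux_quad_smul, aux_quad_one]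
      have h3 := aux_quad_re_ge hB x
      have h4 := aux_norm_re_nonneg x
      have h5 : -c ≤ lmin hB := by linarith
      have h6 : 0 ≤ (star x ⬝ᵥ (B *ᵥ x)).re + c * (star x ⬝ᵥ x).re := by
        have := mul_le_mul_of_nonneg_right h5 h4
        linarith
      have h7 : (0:ℝ) ≤ (a + c)⁻¹ := by positivity
      exact mul_nonneg h7 h6
    have hNpsd : (Nh : Matrix (Fin k) (Fin k) ℂ).PosSemidef := by
      refine (aux_psd_iff Nh.2).2 fun x => ?_
      rw [hNco, aux_quad_smul, aux_quad_sub, aux_quad_smul, aux_quad_one]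
      have h3 := aux_quad_re_le hB x
      have h4 := aux_norm_re_nonneg x
      have h6 : 0 ≤ a * (star x ⬝ᵥ x).re - (star x ⬝ᵥ (B *ᵥ x)).re := by
        have := mul_le_mul_of_nonneg_right h1 h4
        linarith
      have h7 : (0:ℝ) ≤ (a + c)⁻¹ := by positivity
      exact mul_nonneg h7 h6
    have hu1 : (star u ⬝ᵥ u).re = 1 := by rw [hu, (aux_eig_quad hA ia).2]; simp
    have hw1 : (star w ⬝ᵥ w).re = 1 := by rw [hw, (aux_eig_quad hA ic).2]; simp
    have hqa : (star u ⬝ᵥ (A *ᵥ u)).re = a := by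
      rw [hu, (aux_eig_quad hA ia).1, hia]; simp [ha']
    have hqc : (star w ⬝ᵥ (A *ᵥ w)).re = -c := by
      rw [hw, (aux_eig_quad hA ic).1, hic]; simp [hc']
    refine ⟨{ toFun := fun X => (star u ⬝ᵥ ((X : Matrix (Fin n) (Fin n) ℂ) *ᵥ u)).re • Mh
                + (star w ⬝ᵥ ((X : Matrix (Fin n) (Fin n) ℂ) *ᵥ w)).re • Nh,
              map_add' := ?_, map_smul' := ?_ }, ?_, ?_, ?_⟩
    · intro X Y
      simp only [AddSubgroup.coe_add, aux_quad_add, add_smul]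
      abel
    · intro r X
      simp only [selfAdjoint.val_smul, RingHom.id_apply, aux_quad_smul, smul_add,
        smul_smul]
    · -- positivity
      intro X hX
      have hsu : 0 ≤ (star u ⬝ᵥ ((X : Matrix (Fin n) (Fin n) ℂ) *ᵥ u)).re :=
        (aux_psd_iff X.2).1 hX u
      have hsw : 0 ≤ (star w ⬝ᵥ ((X : Matrix (Fin n) (Fin n) ℂ) *ᵥ w)).re :=
        (aux_psd_iff X.2).1 hX w
      set s := (star u ⬝ᵥ ((X : Matrix (Fin n) (Fin n) ℂ) *ᵥ u)).re
      set t := (star w ⬝ᵥ ((X : Matrix (Fin n) (Fin n) ℂ) *ᵥ w)).re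
      have hco : ((s • Mh + t • Nh : Herm k) : Matrix (Fin k) (Fin k) ℂ)
          = s • (Mh : Matrix (Fin k) (Fin k) ℂ) + t • (Nh : Matrix (Fin k) (Fin k) ℂ) := by
        simp [selfAdjoint.val_smul]
      show ((s • Mh + t • Nh : Herm k) : Matrix (Fin k) (Fin k) ℂ).PosSemidef
      refine (aux_psd_iff (s • Mh + t • Nh : Herm k).2).2 fun x => ?_
      rw [hco, aux_quad_add, aux_quad_smul, aux_quad_smul]
      exact add_nonneg (mul_nonneg hsu ((aux_psd_iff Mh.2).1 hMpsd x))
        (mul_nonneg hsw ((aux_psd_iff Nh.2).1 hNpsd x))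
    · -- unital
      apply Subtype.ext
      show ((_ : Herm k) : Matrix (Fin k) (Fin k) ℂ) = _
      simp only [LinearMap.coe_mk, AddHom.coe_mk, selfAdjoint.val_one, one_mulVec, hu1, hw1,
        one_smul, AddSubgroup.coe_add, selfAdjoint.val_smul, hMco, hNco]
      match_scalars <;> field_simp <;> try ring
    · -- maps A to B
      apply Subtype.ext
      show ((_ : Herm k) : Matrix (Fin k) (Fin k) ℂ) = _
      simp only [LinearMap.coe_mk, AddHom.coe_mk, hqa, hqc, AddSubgroup.coe_add,
        selfAdjoint.val_smul, hMco, hNco]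
      match_scalars <;> field_simp <;> ring
end

section
/- For a Hermitian matrix A with Jordan decomposition A = A₊ − A₋ and k negative eigenvalues, if X is Hermitian with ‖X‖_1 ≤ 1 and p ≥ 0 satisfies A + pX ≥ 0, then p ≥ ‖A₋‖_1. (Key step: the Weyl-type inequality p·λ_i(X) ≥ λ_i(−A) for the non-increasingly ordered eigenvalues, summed over the top k indices, combined with Σ_{i=1}^k λ_i(X) ≤ ‖X‖_1 ≤ 1.) -/
open Matrix
open scoped ComplexOrder

section Helpers
variable {n : ℕ}

lemma psd_diag_re_nonneg {M : Matrix (Fin n) (Fin n) ℂ} (hM : M.PosSemidef) (i : Fin n) :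
    0 ≤ (M i i).re := by
  have h := hM.re_dotProduct_nonneg (Pi.single i 1)
  simpa [dotProduct, mulVec, Pi.single_apply, apply_ite, mul_comm] using h

lemma psd_trace_re_nonneg {M : Matrix (Fin n) (Fin n) ℂ} (hM : M.PosSemidef) :
    0 ≤ (M.trace).re := by
  rw [Matrix.trace, Complex.re_sum]
  exact Finset.sum_nonneg fun i _ => psd_diag_re_nonneg hM i

open scoped MatrixOrder in
lemma trace_mul_psd_re_nonneg {B C : Matrix (Fin n) (Fin n) ℂ}
    (hB : B.PosSemidef) (hC : C.PosSemidef) : 0 ≤ ((B * C).trace).re := by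
  set S := CFC.sqrt B with hSdef
  have hS : S * S = B := CFC.sqrt_mul_sqrt_self B hB.nonneg
  have h2 : (B * C).trace = (S * C * S).trace := by
    rw [← hS, Matrix.mul_assoc, Matrix.trace_mul_comm, Matrix.mul_assoc]
  rw [h2]
  have hpsd : (S * C * S).PosSemidef := by
    have := hC.mul_mul_conjTranspose_same S
    rwa [(CFC.sqrt_nonneg B).posSemidef.1.eq] at this
  exact psd_trace_re_nonneg hpsd

end Helpers

/-- if `X` is Hermitian with `‖X‖_1 ≤ 1`, `p ≥ 0` and `A + pX ≥ 0`,
then `p ≥ ‖A₋‖_1`. -/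
theorem stmt16 (n : ℕ)
    (A Ap An : Matrix (Fin n) (Fin n) ℂ) (hA : A.IsHermitian)
    (hAp : Ap.PosSemidef) (hAn : An.PosSemidef) (hJ : A = Ap - An) (hO : Ap * An = 0)
    (k : ℕ) (hk : k = (Finset.univ.filter fun i => hA.eigenvalues i < 0).card)
    (X : Matrix (Fin n) (Fin n) ℂ) (hX : X.IsHermitian) (hX1 : trN hX ≤ 1)
    (p : ℝ) (hp : 0 ≤ p) (hpos : (A + p • X).PosSemidef) :
    trN hAn.1 ≤ p := by
  classical
  set ν : Fin n → ℝ := hAn.1.eigenvalues with hνdef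
  set V : Matrix (Fin n) (Fin n) ℂ := (hAn.1.eigenvectorUnitary : Matrix (Fin n) (Fin n) ℂ) with hVdef
  have hVmem : V ∈ Matrix.unitaryGroup (Fin n) ℂ := hAn.1.eigenvectorUnitary.2
  have hVV : V * Vᴴ = 1 := by
    have := Matrix.mem_unitaryGroup_iff.mp hVmem
    rwa [Matrix.star_eq_conjTranspose] at this
  have hVsV : Vᴴ * V = 1 := by
    have := Matrix.mem_unitaryGroup_iff'.mp hVmem
    rwa [Matrix.star_eq_conjTranspose] at this
  have hAnspec : An = V * Matrix.diagonal (RCLike.ofReal ∘ ν) * Vᴴ := by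
    have := hAn.1.spectral_theorem
    rwa [Unitary.conjStarAlgAut_apply, Matrix.star_eq_conjTranspose] at this
  set d : Fin n → ℂ := fun i => if ν i = 0 then 0 else 1 with hddef
  set Q : Matrix (Fin n) (Fin n) ℂ := V * Matrix.diagonal d * Vᴴ with hQdef
  have hQpsd : Q.PosSemidef := by
    refine Matrix.PosSemidef.mul_mul_conjTranspose_same ?_ V
    refine Matrix.posSemidef_diagonal_iff.mpr fun i => ?_
    by_cases h : ν i = 0 <;> simp [hddef, h]
  have hQ1 : ((1 : Matrix (Fin n) (Fin n) ℂ) - Q).PosSemidef := by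
    have he : (1 : Matrix (Fin n) (Fin n) ℂ) - Q
        = V * Matrix.diagonal (fun i => 1 - d i) * Vᴴ := by
      have hd1 : Matrix.diagonal (fun i => 1 - d i)
          = 1 - Matrix.diagonal d := by
        rw [← Matrix.diagonal_one, Matrix.diagonal_sub]
      rw [hQdef, hd1, Matrix.mul_sub, Matrix.sub_mul, Matrix.mul_one, hVV]
    rw [he]
    refine Matrix.PosSemidef.mul_mul_conjTranspose_same ?_ V
    refine Matrix.posSemidef_diagonal_iff.mpr fun i => ?_
    by_cases h : ν i = 0 <;> simp [hddef, h]
  -- Ap * Q = 0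
  have hApVD : Ap * V * Matrix.diagonal (RCLike.ofReal ∘ ν) = 0 := by
    have h0 : Ap * An * V = 0 := by rw [hO, Matrix.zero_mul]
    rw [hAnspec] at h0
    calc Ap * V * Matrix.diagonal (RCLike.ofReal ∘ ν)
        = Ap * (V * Matrix.diagonal (RCLike.ofReal ∘ ν) * Vᴴ) * V := by
          simp only [Matrix.mul_assoc, hVsV, Matrix.mul_one]
      _ = 0 := h0
  have hApVd : Ap * V * Matrix.diagonal d = 0 := by
    ext i j
    rw [Matrix.mul_diagonal, Matrix.zero_apply]
    by_cases h : ν j = 0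
    · simp [hddef, h]
    · have h2 : (Ap * V) i j * ((RCLike.ofReal ∘ ν) j) = 0 := by
        have h3 := congrFun (congrFun hApVD i) j
        rwa [Matrix.mul_diagonal] at h3
      have hν : ((RCLike.ofReal ∘ ν) j : ℂ) ≠ 0 := by
        simpa using Complex.ofReal_ne_zero.mpr h
      have h4 : (Ap * V) i j = 0 := (mul_eq_zero.mp h2).resolve_right hν
      simp [hddef, h, h4]
  have hApQ : Ap * Q = 0 := by
    rw [hQdef, ← Matrix.mul_assoc, ← Matrix.mul_assoc, hApVd, Matrix.zero_mul]
  have hQAp : Q * Ap = 0 := by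
    have h5 := congrArg Matrix.conjTranspose hApQ
    rwa [Matrix.conjTranspose_mul, Matrix.conjTranspose_zero, hQpsd.1.eq, hAp.1.eq] at h5
  -- An * Q = An
  have key : ∀ D E : Matrix (Fin n) (Fin n) ℂ,
      (V * D * Vᴴ) * (V * E * Vᴴ) = V * (D * E) * Vᴴ := by
    intro D E
    simp only [← Matrix.mul_assoc]
    rw [Matrix.mul_assoc (V * D) Vᴴ V, hVsV, Matrix.mul_one]
  have hAnQ : An * Q = An := by
    rw [hQdef]
    conv_lhs => rw [hAnspec]
    rw [key]
    have hDE : Matrix.diagonal (RCLike.ofReal ∘ ν) * Matrix.diagonal d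
        = Matrix.diagonal (RCLike.ofReal ∘ ν) := by
      rw [Matrix.diagonal_mul_diagonal]
      have hfun : (fun i => (RCLike.ofReal ∘ ν) i * d i) = (RCLike.ofReal ∘ ν) := by
        funext i; by_cases h : ν i = 0 <;> simp [hddef, h]
      rw [hfun]
    rw [hDE, ← hAnspec]
  have hQAn : Q * An = An := by
    have h5 := congrArg Matrix.conjTranspose hAnQ
    rwa [Matrix.conjTranspose_mul, hQpsd.1.eq, hAn.1.eq] at h5
  -- trace identities
  have hQA : Q * A = -An := by
    rw [hJ, Matrix.mul_sub, hQAp, hQAn, zero_sub]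
  have h0 : 0 ≤ ((Q * (A + p • X)).trace).re := trace_mul_psd_re_nonneg hQpsd hpos
  have hexp : (Q * (A + p • X)).trace = -An.trace + (p : ℂ) * (Q * X).trace := by
    rw [Matrix.mul_add, Matrix.trace_add, hQA, Matrix.trace_neg, Matrix.mul_smul,
      Matrix.trace_smul]
    simp [Complex.real_smul]
  -- trace of An
  have hAntr : (An.trace).re = ∑ i, ν i := by
    have h6 : An.trace = (Matrix.diagonal (RCLike.ofReal ∘ ν)).trace := by
      rw [hAnspec, Matrix.trace_mul_cycle, hVsV, Matrix.one_mul]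
    rw [h6, Matrix.trace_diagonal, Complex.re_sum]
    simp
  have htrN : trN hAn.1 = ∑ i, ν i := by
    unfold trN
    exact Finset.sum_congr rfl fun i _ => abs_of_nonneg (hAn.eigenvalues_nonneg i)
  -- bound on trace of Q * X
  have hQX : ((Q * X).trace).re ≤ 1 := by
    set μ : Fin n → ℝ := hX.eigenvalues with hμdef
    set U : Matrix (Fin n) (Fin n) ℂ := (hX.eigenvectorUnitary : Matrix (Fin n) (Fin n) ℂ) with hUdef
    have hUmem : U ∈ Matrix.unitaryGroup (Fin n) ℂ := hX.eigenvectorUnitary.2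
    have hUsU : Uᴴ * U = 1 := by
      have := Matrix.mem_unitaryGroup_iff'.mp hUmem
      rwa [Matrix.star_eq_conjTranspose] at this
    have hXspec : X = U * Matrix.diagonal (RCLike.ofReal ∘ μ) * Uᴴ := by
      have := hX.spectral_theorem
      rwa [Unitary.conjStarAlgAut_apply, Matrix.star_eq_conjTranspose] at this
    set M : Matrix (Fin n) (Fin n) ℂ := Uᴴ * Q * U with hMdef
    have hMpsd : M.PosSemidef := hQpsd.conjTranspose_mul_mul_same U
    have hM1 : ((1 : Matrix (Fin n) (Fin n) ℂ) - M).PosSemidef := by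
      have he : (1 : Matrix (Fin n) (Fin n) ℂ) - M = Uᴴ * (1 - Q) * U := by
        rw [hMdef, Matrix.mul_sub, Matrix.sub_mul, Matrix.mul_one, hUsU]
      rw [he]
      exact hQ1.conjTranspose_mul_mul_same U
    have htr : (Q * X).trace = (M * Matrix.diagonal (RCLike.ofReal ∘ μ)).trace := by
      conv_lhs => rw [hXspec]
      rw [hMdef]
      rw [show Q * (U * Matrix.diagonal (RCLike.ofReal ∘ μ) * Uᴴ)
          = (Q * U * Matrix.diagonal (RCLike.ofReal ∘ μ)) * Uᴴ by
        simp only [Matrix.mul_assoc]]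
      rw [Matrix.trace_mul_comm]
      simp only [Matrix.mul_assoc]
    have hub : ∀ i, (M i i).re ≤ 1 := by
      intro i
      have h7 := psd_diag_re_nonneg hM1 i
      have h8 : ((1 - M : Matrix (Fin n) (Fin n) ℂ) i i).re = 1 - (M i i).re := by
        simp [Matrix.sub_apply, Matrix.one_apply]
      rw [h8] at h7
      linarith
    have hlb : ∀ i, 0 ≤ (M i i).re := fun i => psd_diag_re_nonneg hMpsd i
    calc ((Q * X).trace).re = ∑ i, (M i i).re * μ i := by
          rw [htr, Matrix.trace, Complex.re_sum]
          refine Finset.sum_congr rfl fun i _ => ?_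
          simp [Matrix.diag, Matrix.mul_diagonal, Complex.mul_re]
      _ ≤ ∑ i, |μ i| := by
          refine Finset.sum_le_sum fun i _ => ?_
          rcases le_or_gt 0 (μ i) with h | h
          · calc (M i i).re * μ i ≤ 1 * μ i := mul_le_mul_of_nonneg_right (hub i) h
              _ = μ i := one_mul _
              _ ≤ |μ i| := le_abs_self _
          · calc (M i i).re * μ i ≤ 0 := mul_nonpos_of_nonneg_of_nonpos (hlb i) h.le
              _ ≤ |μ i| := abs_nonneg _
      _ = trN hX := rfl
      _ ≤ 1 := hX1
  -- conclude
  rw [hexp] at h0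
  have h9 : (0:ℝ) ≤ -(∑ i, ν i) + p * ((Q * X).trace).re := by
    simpa [Complex.add_re, Complex.neg_re, Complex.mul_re, hAntr] using h0
  have h10 : p * ((Q * X).trace).re ≤ p * 1 := mul_le_mul_of_nonneg_left hQX hp
  rw [htrN]
  linarith
end

section
/- Let μ be any function on Hermitian matrices such that μ(Φ(A)) ≤ μ(A) for all positive unital linear maps Φ and all Hermitian A. Then for any two Hermitian matrices A, B, each neither positive nor negative semidefinite, with ‖A₊‖_∞ = ‖B₊‖_∞ and ‖A₋‖_∞ = ‖B₋‖_∞, we have μ(A) = μ(B). -/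
open Matrix
open scoped ComplexOrder

noncomputable section StmtAux


lemma eigBasis_dot {m : ℕ} {P : Matrix (Fin m) (Fin m) ℂ} (hP : P.IsHermitian) (i : Fin m) :
    star ⇑(hP.eigenvectorBasis i) ⬝ᵥ ⇑(hP.eigenvectorBasis i) = 1 := by
  rw [dotProduct_comm]
  simp only [← EuclideanSpace.inner_eq_star_dotProduct, inner_self_eq_norm_sq_to_K,
    hP.eigenvectorBasis.orthonormal.1 i, one_pow, algebraMap.coe_one, Complex.ofReal_one]

lemma vecMulVec_herm {m : ℕ} (w : Fin m → ℂ) :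
    (vecMulVec w (star w)).IsHermitian := by
  ext i j
  simp [conjTranspose_apply, vecMulVec_apply, mul_comm]

lemma dot_vecMulVec {m : ℕ} (w x : Fin m → ℂ) :
    star x ⬝ᵥ (vecMulVec w (star w)) *ᵥ x = (star x ⬝ᵥ w) * (star w ⬝ᵥ x) := by
  simp only [dotProduct, mulVec, vecMulVec_apply, Pi.star_apply, Finset.mul_sum,
    Finset.sum_mul]
  rw [Finset.sum_comm]
  exact Finset.sum_congr rfl fun i _ => Finset.sum_congr rfl fun j _ => by ring

lemma vecMulVec_psd {m : ℕ} (w : Fin m → ℂ) :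
    (vecMulVec w (star w)).PosSemidef := by
  refine PosSemidef.of_dotProduct_mulVec_nonneg (vecMulVec_herm w) fun x => ?_
  rw [dot_vecMulVec]
  have : star w ⬝ᵥ x = star (star x ⬝ᵥ w) := by
    simp [dotProduct, mul_comm]
  rw [this]
  exact mul_star_self_nonneg _

def sandwich {m : ℕ} (x : Fin m → ℂ) : Herm m →ₗ[ℝ] ℝ where
  toFun X := Complex.re (star x ⬝ᵥ (X : Matrix (Fin m) (Fin m) ℂ) *ᵥ x)
  map_add' X Y := by
    simp [add_mulVec, dotProduct_add]
  map_smul' r X := by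
    simp [selfAdjoint.val_smul, smul_mulVec, dotProduct_smul, Complex.smul_re]

lemma sandwich_nonneg {m : ℕ} (x : Fin m → ℂ) (X : Herm m)
    (hX : (X : Matrix (Fin m) (Fin m) ℂ).PosSemidef) : 0 ≤ sandwich x X :=
  hX.re_dotProduct_nonneg x

lemma sandwich_one {m : ℕ} (x : Fin m → ℂ) (hx : star x ⬝ᵥ x = 1) :
    sandwich x 1 = 1 := by
  simp [sandwich, LinearMap.coe_mk, selfAdjoint.val_one, one_mulVec, hx]

lemma eig_le_opN {m : ℕ} {P : Matrix (Fin m) (Fin m) ℂ} (hP : P.PosSemidef) (i : Fin m) :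
    hP.1.eigenvalues i ≤ opN hP.1 := by
  rw [← abs_of_nonneg (hP.eigenvalues_nonneg i)]
  exact le_ciSup (f := fun i => |hP.1.eigenvalues i|)
    (Set.Finite.bddAbove (Set.finite_range _)) i

lemma rayleigh_le {m : ℕ} {P : Matrix (Fin m) (Fin m) ℂ} (hP : P.PosSemidef)
    (x : Fin m → ℂ) (hx : star x ⬝ᵥ x = 1) :
    Complex.re (star x ⬝ᵥ P *ᵥ x) ≤ opN hP.1 := by
  set U : Matrix (Fin m) (Fin m) ℂ := (hP.1.eigenvectorUnitary : Matrix (Fin m) (Fin m) ℂ) with hU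
  set y : Fin m → ℂ := star U *ᵥ x with hy
  have hstary : star y = star x ᵥ* U := by
    rw [hy, star_mulVec, star_eq_conjTranspose, conjTranspose_conjTranspose]
  have key : star x ⬝ᵥ P *ᵥ x =
      star y ⬝ᵥ (diagonal (RCLike.ofReal ∘ hP.1.eigenvalues) : Matrix (Fin m) (Fin m) ℂ) *ᵥ y := by
    conv_lhs => rw [hP.1.spectral_theorem, Unitary.conjStarAlgAut_apply]
    rw [← mulVec_mulVec, ← mulVec_mulVec, dotProduct_mulVec, ← hstary, hy]
  have hUU : U * star U = 1 := (Matrix.mem_unitaryGroup_iff).mp hP.1.eigenvectorUnitary.2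
  have hyy : star y ⬝ᵥ y = 1 := by
    rw [hstary, hy, ← dotProduct_mulVec, mulVec_mulVec, hUU, one_mulVec, hx]
  rw [key]
  have hre : ∀ i, (star (y i) * y i).re = Complex.normSq (y i) := fun i => by
    rw [Complex.star_def, mul_comm, Complex.mul_conj, Complex.ofReal_re]
  have h1 : (star y ⬝ᵥ (diagonal (RCLike.ofReal ∘ hP.1.eigenvalues)
      : Matrix (Fin m) (Fin m) ℂ) *ᵥ y).re
      = ∑ i, hP.1.eigenvalues i * Complex.normSq (y i) := by
    rw [dotProduct, Complex.re_sum]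
    refine Finset.sum_congr rfl fun i _ => ?_
    rw [mulVec_diagonal, Pi.star_apply]
    have h : star (y i) * ((RCLike.ofReal ∘ hP.1.eigenvalues) i * y i)
        = ((hP.1.eigenvalues i : ℝ) : ℂ) * (y i * (starRingEnd ℂ) (y i)) := by
      simp only [Function.comp_apply, Complex.star_def]
      rw [show ((RCLike.ofReal (hP.1.eigenvalues i) : ℂ)) = ((hP.1.eigenvalues i : ℂ)) from rfl]
      ring
    rw [h, Complex.mul_conj, ← Complex.ofReal_mul, Complex.ofReal_re]
  have h2 : ∑ i, Complex.normSq (y i) = 1 := by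
    have h := congrArg Complex.re hyy
    rw [dotProduct, Complex.re_sum, Complex.one_re] at h
    rw [← h]
    exact Finset.sum_congr rfl fun i _ => by rw [Pi.star_apply, hre i]
  rw [h1]
  calc ∑ i, hP.1.eigenvalues i * Complex.normSq (y i)
      ≤ ∑ i, opN hP.1 * Complex.normSq (y i) :=
        Finset.sum_le_sum fun i _ => mul_le_mul_of_nonneg_right (eig_le_opN hP i)
          (Complex.normSq_nonneg _)
    _ = opN hP.1 := by rw [← Finset.mul_sum, h2, mul_one]

lemma psd_top_eigen {m : ℕ} {P : Matrix (Fin m) (Fin m) ℂ} (hP : P.PosSemidef)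
    (hm : P ≠ 0) :
    0 < opN hP.1 ∧ ∃ w : Fin m → ℂ, star w ⬝ᵥ w = 1 ∧ P *ᵥ w = opN hP.1 • w := by
  have hne : m ≠ 0 := by
    rintro rfl; exact hm (by ext i j; exact i.elim0)
  have : NeZero m := ⟨hne⟩
  have hub : ∀ i, |hP.1.eigenvalues i| ≤ opN hP.1 := fun i =>
    le_ciSup (f := fun i => |hP.1.eigenvalues i|) (Set.Finite.bddAbove (Set.finite_range _)) i
  obtain ⟨i0, hi0⟩ := exists_eq_ciSup_of_finite (f := fun i => |hP.1.eigenvalues i|)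
  have heig : hP.1.eigenvalues i0 = opN hP.1 := by
    rw [← abs_of_nonneg (hP.eigenvalues_nonneg i0)]; exact hi0
  have hpos : 0 < opN hP.1 := by
    rcases lt_or_eq_of_le (le_trans (abs_nonneg _) (hub i0)) with h | h
    · exact h
    · exfalso
      apply hm
      have hall : ∀ i, hP.1.eigenvalues i = 0 := fun i =>
        abs_eq_zero.mp (le_antisymm ((hub i).trans h.symm.le) (abs_nonneg _))
      rw [hP.1.spectral_theorem, Unitary.conjStarAlgAut_apply]
      have hd : diagonal (RCLike.ofReal ∘ hP.1.eigenvalues) = (0 : Matrix (Fin m) (Fin m) ℂ) := by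
        ext i j
        by_cases hij : i = j <;> simp [diagonal_apply, hij, hall]
      rw [hd, mul_zero, zero_mul]
  refine ⟨hpos, ⇑(hP.1.eigenvectorBasis i0), eigBasis_dot _ _, ?_⟩
  rw [hP.1.mulVec_eigenvectorBasis i0, heig]

lemma psd_smul {m : ℕ} {M : Matrix (Fin m) (Fin m) ℂ} (hM : M.PosSemidef) {c : ℝ} (hc : 0 ≤ c) :
    (c • M).PosSemidef := by
  refine PosSemidef.of_dotProduct_mulVec_nonneg ?_ fun x => ?_
  · have := hM.1
    unfold Matrix.IsHermitian at *
    rw [conjTranspose_smul, this]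
    norm_num
  · rw [smul_mulVec, dotProduct_smul, Complex.real_smul]
    exact mul_nonneg (by exact_mod_cast hc) (hM.dotProduct_mulVec_nonneg x)

lemma re_dot_nonneg {m : ℕ} {M : Matrix (Fin m) (Fin m) ℂ} (hM : M.PosSemidef) (x : Fin m → ℂ) :
    0 ≤ (star x ⬝ᵥ M *ᵥ x).re := by
  have := hM.dotProduct_mulVec_nonneg x
  rw [Complex.le_def] at this
  simpa using this.1

lemma key_le (μ : ∀ n : ℕ, Herm n → ℝ)
    (hmono : ∀ (n k : ℕ) (Φ : Herm n →ₗ[ℝ] Herm k),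
      IsPositiveMap Φ → Φ 1 = 1 → ∀ A : Herm n, μ k (Φ A) ≤ μ n A)
    (n k : ℕ)
    (A Ap An : Matrix (Fin n) (Fin n) ℂ) (hA : A.IsHermitian)
    (hA1 : ¬ A.PosSemidef) (hA2 : ¬ (-A).PosSemidef)
    (hAp : Ap.PosSemidef) (hAn : An.PosSemidef) (hJA : A = Ap - An) (hOA : Ap * An = 0)
    (B Bp Bn : Matrix (Fin k) (Fin k) ℂ) (hB : B.IsHermitian)
    (hBp : Bp.PosSemidef) (hBn : Bn.PosSemidef) (hJB : B = Bp - Bn)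
    (heqp : opN hAp.1 = opN hBp.1) (heqn : opN hAn.1 = opN hBn.1) :
    μ k ⟨B, hB⟩ ≤ μ n ⟨A, hA⟩ := by
  set a := opN hAp.1 with ha
  set b := opN hAn.1 with hb
  have hApne : Ap ≠ 0 := by
    rintro h; apply hA2; rw [hJA, h, zero_sub, neg_neg]; exact hAn
  have hAnne : An ≠ 0 := by
    rintro h; apply hA1; rw [hJA, h, sub_zero]; exact hAp
  obtain ⟨hapos, u, hu1, hApu⟩ := psd_top_eigen hAp hApne
  obtain ⟨hbpos, v, hv1, hAnv⟩ := psd_top_eigen hAn hAnne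
  have hOA' : An * Ap = 0 := by
    have h := congrArg star hOA
    rw [Matrix.star_mul, star_zero, star_eq_conjTranspose, star_eq_conjTranspose, hAn.1, hAp.1] at h
    exact h
  have hAnu : An *ᵥ u = 0 := by
    have h : An *ᵥ (Ap *ᵥ u) = 0 := by rw [mulVec_mulVec, hOA', zero_mulVec]
    rw [hApu, mulVec_smul] at h
    exact (smul_eq_zero.mp h).resolve_left (ne_of_gt hapos)
  have hApv : Ap *ᵥ v = 0 := by
    have h : Ap *ᵥ (An *ᵥ v) = 0 := by rw [mulVec_mulVec, hOA, zero_mulVec]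
    rw [hAnv, mulVec_smul] at h
    exact (smul_eq_zero.mp h).resolve_left (ne_of_gt hbpos)
  have hAu : A *ᵥ u = a • u := by rw [hJA, sub_mulVec, hAnu, sub_zero, hApu]
  have hAv : A *ᵥ v = -(b • v) := by rw [hJA, sub_mulVec, hApv, zero_sub, hAnv]
  have hsu : sandwich u ⟨A, hA⟩ = a := by
    show (star u ⬝ᵥ A *ᵥ u).re = a
    rw [hAu, dotProduct_smul, hu1, Complex.smul_re, Complex.one_re, smul_eq_mul, mul_one]
  have hsv : sandwich v ⟨A, hA⟩ = -b := by
    show (star v ⬝ᵥ A *ᵥ v).re = -b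
    rw [hAv, dotProduct_neg, dotProduct_smul, hv1, Complex.neg_re, Complex.smul_re,
      Complex.one_re, smul_eq_mul, mul_one]
  -- eigenvalue bounds for B
  have hwdot : ∀ i, star ⇑(hB.eigenvectorBasis i) ⬝ᵥ ⇑(hB.eigenvectorBasis i) = 1 :=
    eigBasis_dot hB
  have hsplit : ∀ i : Fin k, hB.eigenvalues i
      = (star ⇑(hB.eigenvectorBasis i) ⬝ᵥ Bp *ᵥ ⇑(hB.eigenvectorBasis i)).re
        - (star ⇑(hB.eigenvectorBasis i) ⬝ᵥ Bn *ᵥ ⇑(hB.eigenvectorBasis i)).re := by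
    intro i
    have h2gen : ∀ w : Fin k → ℂ, star w ⬝ᵥ B *ᵥ w = star w ⬝ᵥ Bp *ᵥ w - star w ⬝ᵥ Bn *ᵥ w := by
      intro w; rw [hJB, sub_mulVec, dotProduct_sub]
    have h2 := h2gen ⇑(hB.eigenvectorBasis i)
    have h := hB.eigenvalues_eq i
    rw [h2, map_sub] at h
    simpa [RCLike.re_to_complex] using h
  have hble : ∀ i, hB.eigenvalues i ≤ a := by
    intro i
    have h1 := rayleigh_le hBp _ (hwdot i)
    have h2 := re_dot_nonneg hBn (⇑(hB.eigenvectorBasis i))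
    have h1' : (star ⇑(hB.eigenvectorBasis i) ⬝ᵥ Bp *ᵥ ⇑(hB.eigenvectorBasis i)).re ≤ a := by
      rw [heqp]; exact h1
    linarith [hsplit i]
  have hbge : ∀ i, -b ≤ hB.eigenvalues i := by
    intro i
    have h1 := rayleigh_le hBn _ (hwdot i)
    have h2 := re_dot_nonneg hBp (⇑(hB.eigenvectorBasis i))
    have h1' : (star ⇑(hB.eigenvectorBasis i) ⬝ᵥ Bn *ᵥ ⇑(hB.eigenvectorBasis i)).re ≤ b := by
      rw [heqn]; exact h1
    linarith [hsplit i]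
  have hab : (0:ℝ) < a + b := by linarith
  -- coefficients
  set t : Fin k → ℝ := fun i => (hB.eigenvalues i + b) / (a + b) with ht
  have ht0 : ∀ i, 0 ≤ t i := fun i => div_nonneg (by have := hbge i; linarith) hab.le
  have ht1 : ∀ i, t i ≤ 1 := fun i => by
    rw [ht, div_le_one hab]; have := hble i; linarith
  set f : Fin k → (Herm n →ₗ[ℝ] ℝ) :=
    fun i => t i • sandwich u + (1 - t i) • sandwich v with hf
  have hfnn : ∀ i (X : Herm n), (X : Matrix (Fin n) (Fin n) ℂ).PosSemidef → 0 ≤ f i X := by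
    intro i X hX
    have h1 := sandwich_nonneg u X hX
    have h2 := sandwich_nonneg v X hX
    simp only [hf, LinearMap.add_apply, LinearMap.smul_apply, smul_eq_mul]
    have := ht0 i; have := ht1 i
    nlinarith
  set P : Fin k → Herm k := fun i =>
    ⟨vecMulVec ⇑(hB.eigenvectorBasis i) (star ⇑(hB.eigenvectorBasis i)),
      (star_eq_conjTranspose _).trans (vecMulVec_herm _)⟩ with hP
  set Φ : Herm n →ₗ[ℝ] Herm k := ∑ i, (f i).smulRight (P i) with hΦ
  have hval : ∀ X : Herm n, ((Φ X : Matrix (Fin k) (Fin k) ℂ))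
      = ∑ i, (f i X) • vecMulVec ⇑(hB.eigenvectorBasis i) (star ⇑(hB.eigenvectorBasis i)) := by
    intro X
    rw [hΦ, LinearMap.sum_apply, AddSubmonoidClass.coe_finset_sum]
    exact Finset.sum_congr rfl fun i _ => by
      rw [LinearMap.smulRight_apply, selfAdjoint.val_smul]
  have hpos : IsPositiveMap Φ := by
    intro X hX
    rw [hval X]
    refine Finset.sum_induction _ Matrix.PosSemidef (fun p q hp hq => hp.add hq)
      Matrix.PosSemidef.zero (fun i _ => psd_smul (vecMulVec_psd _) (hfnn i X hX))
  have hsum1 : ∑ i, vecMulVec ⇑(hB.eigenvectorBasis i) (star ⇑(hB.eigenvectorBasis i))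
      = (1 : Matrix (Fin k) (Fin k) ℂ) := by
    have hUU := (Matrix.mem_unitaryGroup_iff).mp hB.eigenvectorUnitary.2
    rw [← hUU]
    ext j l
    simp [Matrix.mul_apply, vecMulVec_apply, Matrix.sum_apply, Matrix.star_apply,
      Matrix.IsHermitian.eigenvectorUnitary_apply]
  have hunital : Φ 1 = 1 := by
    apply Subtype.ext
    rw [hval 1]
    have hf1 : ∀ i, f i (1 : Herm n) = 1 := by
      intro i
      simp only [hf, LinearMap.add_apply, LinearMap.smul_apply, smul_eq_mul,
        sandwich_one u hu1, sandwich_one v hv1]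
      ring
    rw [selfAdjoint.val_one, ← hsum1]
    exact Finset.sum_congr rfl fun i _ => by rw [hf1 i, one_smul]
  have hfA : ∀ i, f i ⟨A, hA⟩ = hB.eigenvalues i := by
    intro i
    simp only [hf, LinearMap.add_apply, LinearMap.smul_apply, smul_eq_mul, hsu, hsv, ht]
    field_simp
    ring
  have hBsum : ∑ i, (hB.eigenvalues i) •
      vecMulVec ⇑(hB.eigenvectorBasis i) (star ⇑(hB.eigenvectorBasis i)) = B := by
    conv_rhs => rw [hB.spectral_theorem, Unitary.conjStarAlgAut_apply]
    ext j l
    rw [Matrix.sum_apply, Matrix.mul_apply]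
    refine Finset.sum_congr rfl fun i _ => ?_
    rw [Matrix.mul_diagonal, Matrix.smul_apply, vecMulVec_apply, Pi.star_apply]
    simp only [Matrix.star_apply, Matrix.IsHermitian.eigenvectorUnitary_apply,
      Function.comp_apply, Complex.real_smul]
    rw [show (RCLike.ofReal (hB.eigenvalues i) : ℂ) = ((hB.eigenvalues i : ℝ) : ℂ) from rfl]
    ring
  have hΦA : Φ ⟨A, hA⟩ = ⟨B, hB⟩ := by
    apply Subtype.ext
    rw [hval ⟨A, hA⟩]
    show _ = B
    exact (Finset.sum_congr rfl fun i _ => by rw [hfA i]).trans hBsum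
  have := hmono n k Φ hpos hunital ⟨A, hA⟩
  rwa [hΦA] at this

end StmtAux

/-- any function monotone under all positive unital maps takes equal values
on indefinite Hermitian matrices with equal `‖·₊‖_∞` and `‖·₋‖_∞`. -/
theorem stmt18 (μ : ∀ n : ℕ, Herm n → ℝ)
    (hmono : ∀ (n k : ℕ) (Φ : Herm n →ₗ[ℝ] Herm k),
      IsPositiveMap Φ → Φ 1 = 1 → ∀ A : Herm n, μ k (Φ A) ≤ μ n A)
    (n k : ℕ)
    (A Ap An : Matrix (Fin n) (Fin n) ℂ) (hA : A.IsHermitian)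
    (hA1 : ¬ A.PosSemidef) (hA2 : ¬ (-A).PosSemidef)
    (hAp : Ap.PosSemidef) (hAn : An.PosSemidef) (hJA : A = Ap - An) (hOA : Ap * An = 0)
    (B Bp Bn : Matrix (Fin k) (Fin k) ℂ) (hB : B.IsHermitian)
    (hB1 : ¬ B.PosSemidef) (hB2 : ¬ (-B).PosSemidef)
    (hBp : Bp.PosSemidef) (hBn : Bn.PosSemidef) (hJB : B = Bp - Bn) (hOB : Bp * Bn = 0)
    (heqp : opN hAp.1 = opN hBp.1) (heqn : opN hAn.1 = opN hBn.1) :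
    μ n ⟨A, hA⟩ = μ k ⟨B, hB⟩ := by
  have h1 := key_le μ hmono n k A Ap An hA hA1 hA2 hAp hAn hJA hOA
    B Bp Bn hB hBp hBn hJB heqp heqn
  have h2 := key_le μ hmono k n B Bp Bn hB hB1 hB2 hBp hBn hJB hOB
    A Ap An hA hAp hAn hJA heqp.symm heqn.symm
  exact le_antisymm h2 h1
end
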